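/- arXiv:2408.02476 — 5 statements merged into one kernel-verified Lean document; each statement's English description precedes it below -/
import Mathlib

section
/- For every x ∈ ℝ₊^{2k} and every I ∈ 𝓘_k: ∫_{[0,δ]^I} ∫_{[0,δ]^{I^c}} ( Σ_{(J,M)∈𝒥_k} p_{J,M}(x − ι_I u, x − ι_{I^c} u') · ∫_{[0,Δ]^J} 𝒱(x − ι_I u + ι_J β) · 1{x − ι_I u + ι_J β ∈ ℝ₊^{2k}} · ∏_{j∈J} h((x − ι_I u)_j, β_j) dβ ) ∏_{i∈I} g(u_i) du ∏_{i'∈I^c} g(u'_{i'}) du' ≤ (1 + ε₁) 𝒱(x), where ε₁ = (1 + 𝓛(g)(λ₀)) Λ(λ₀, L) − 1. (This is statement (ii) of Assumption (S_{2.2}) for the Lyapunov function 𝒱 of Proposition 5.1, written with the explicit shortening and lengthening kernels.) -/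
/-!
For fixed shortenings `u, u'` put `r = x - ι_I u`. Coordinatewise
`v(r_i + β_i) ≤ v(r_i) e^{λ₀ β_i}`, and when `r_i` is not large (`i ∉ 𝓔_L(r)`) a lengthening
`β_i ≤ Δ` keeps `r_i + β_i` below the threshold where `v` starts to grow, so
`v(r_i + β_i) = 1 ≤ v(r_i)`. Integrating against the lengthening densities bounds the
`β`-integral by `𝒱(r) ∏_{i ∈ J ∩ 𝓔_L(r)} ∫ e^{λ₀ u} h(r_i, u) du`, and averaging over `(J, M)`
bounds the sum by `Λ(λ₀, L) 𝒱(r)`. Shortening only decreases `𝒱`, so `𝒱(r) ≤ 𝒱(x)`, and the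
`g`-integrals are averages. Finally `Λ ≤ (1 + 𝓛(g)(λ₀)) Λ = 1 + ε₁`.
-/

open MeasureTheory Finset

noncomputable section

/-- The set `𝓘_k` of admissible shortening index sets. -/
def Ik (k : ℕ) : Finset (Finset (Fin (2*k))) :=
  Finset.univ.filter fun I =>
    I.card = k ∧ ∀ i ∈ I, ∀ j ∈ I, i ≠ j → (i : ℕ) % k ≠ (j : ℕ) % k

/-- The set `𝒥_k` of pairs of nonempty lengthening index sets. -/
def Jk (k : ℕ) : Finset (Finset (Fin (2*k)) × Finset (Fin (2*k))) :=
  Finset.univ.filter fun JM => JM.1.Nonempty ∧ JM.2.Nonempty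

/-- `ι_S u` : the extension by zero of a vector indexed by `S`. -/
def emb {k : ℕ} (S : Finset (Fin (2*k))) (u : {i // i ∈ S} → ℝ) : Fin (2*k) → ℝ :=
  fun i => if h : i ∈ S then u ⟨i, h⟩ else 0

/-- The set `𝓔_L(x)` of "large" coordinates. -/
def EL {k : ℕ} (Bmax Δ δ : ℝ) (L : ℕ) (x : Fin (2*k) → ℝ) : Finset (Fin (2*k)) :=
  Finset.univ.filter fun i => Bmax * (L : ℝ) - 2*Δ - δ < x i

/-- The one-dimensional factor `v` of the Lyapunov function. -/
def vfun (lam0 Bmax Δ δ : ℝ) (L : ℕ) (y : ℝ) : ℝ :=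
  Real.exp (lam0 * max (y - Bmax * (L : ℝ) + Δ + δ) 0)

/-- The Lyapunov function `𝒱`. -/
def Vfun {k : ℕ} (lam0 Bmax Δ δ : ℝ) (L : ℕ) (x : Fin (2*k) → ℝ) : ℝ :=
  ∏ i, vfun lam0 Bmax Δ δ L (x i)

/-- The quantity `Λ(λ, L)`. -/
def Lambda (k : ℕ) (Bmax Δ δ : ℝ)
    (p : Finset (Fin (2*k)) × Finset (Fin (2*k)) → (Fin (2*k) → ℝ) → (Fin (2*k) → ℝ) → ℝ)
    (h : ℝ → ℝ → ℝ) (lam : ℝ) (L : ℕ) : ℝ :=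
  ⨆ rs : (Fin (2*k) → ℝ) × (Fin (2*k) → ℝ),
    ∑ JM ∈ Jk k, p JM rs.1 rs.2 *
      ∏ i ∈ JM.1 ∩ EL Bmax Δ δ L rs.1,
        ∫ u in Set.Ioi (0:ℝ), Real.exp (lam * u) * h (rs.1 i) u

def expMoment (lam : ℝ) (f : ℝ → ℝ) : ℝ :=
  ∫ u in Set.Ioi 0, Real.exp (lam * u) * f u

def lengtheningIntegral {k : ℕ} (lam0 Bmax Δ δ : ℝ) (L : ℕ) (h : ℝ → ℝ → ℝ)
    (r : Fin (2*k) → ℝ) (J : Finset (Fin (2*k))) : ℝ :=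
  ∫ β : {i // i ∈ J} → ℝ in Set.univ.pi fun _ => Set.Icc (0:ℝ) Δ,
    (Vfun lam0 Bmax Δ δ L (r + emb J β) *
        Set.indicator {y : Fin (2*k) → ℝ | ∀ i, 0 ≤ y i} (fun _ => (1:ℝ)) (r + emb J β)) *
      ∏ j : {i // i ∈ J}, h (r j.1) (β j)

section Density

variable {f : ℝ → ℝ} {a : ℝ}

lemma integral_eq_setIntegral_Ioi_of_forall_notMem_Icc (hf : ∀ u ∉ Set.Icc 0 a, f u = 0) :
    ∫ u, f u = ∫ u in Set.Ioi 0, f u := by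
  rw [← integral_Ici_eq_integral_Ioi, setIntegral_eq_integral_of_forall_compl_eq_zero]
  exact fun u hu => hf u fun hu' => hu hu'.1

lemma integrable_of_setIntegral_Ioi_eq_one (hf : ∀ u ∉ Set.Icc 0 a, f u = 0)
    (hf1 : ∫ u in Set.Ioi 0, f u = 1) : Integrable f :=
  Integrable.of_integral_ne_zero <| by
    rw [integral_eq_setIntegral_Ioi_of_forall_notMem_Icc hf, hf1]
    exact one_ne_zero

lemma exp_mul_mul_le_of_forall_notMem_Icc {lam : ℝ} (hlam : 0 ≤ lam) (hf0 : ∀ u, 0 ≤ f u)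
    (hf : ∀ u ∉ Set.Icc 0 a, f u = 0) (u : ℝ) :
    Real.exp (lam * u) * f u ≤ Real.exp (lam * a) * f u := by
  by_cases hu : u ≤ a
  · gcongr
    exact hf0 u
  · simp [hf u fun hu' => hu hu'.2]

lemma integrable_exp_mul_of_forall_notMem_Icc {lam : ℝ} (hlam : 0 ≤ lam) (hf0 : ∀ u, 0 ≤ f u)
    (hf : ∀ u ∉ Set.Icc 0 a, f u = 0) (hfi : Integrable f) :
    Integrable fun u => Real.exp (lam * u) * f u := by
  refine (hfi.const_mul (Real.exp (lam * a))).mono'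
    ((by fun_prop : Continuous fun u => Real.exp (lam * u)).aestronglyMeasurable.mul
      hfi.aestronglyMeasurable) (Filter.Eventually.of_forall fun u => ?_)
  rw [Real.norm_of_nonneg (by have := hf0 u; positivity)]
  exact exp_mul_mul_le_of_forall_notMem_Icc hlam hf0 hf u

lemma expMoment_nonneg (lam : ℝ) (hf0 : ∀ u, 0 ≤ f u) : 0 ≤ expMoment lam f :=
  setIntegral_nonneg measurableSet_Ioi fun u _ => by have := hf0 u; positivity

lemma expMoment_le {lam : ℝ} (hlam : 0 ≤ lam) (hf0 : ∀ u, 0 ≤ f u)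
    (hf : ∀ u ∉ Set.Icc 0 a, f u = 0) (hf1 : ∫ u in Set.Ioi 0, f u = 1) :
    expMoment lam f ≤ Real.exp (lam * a) := by
  have hfi := integrable_of_setIntegral_Ioi_eq_one hf hf1
  calc expMoment lam f ≤ ∫ u in Set.Ioi 0, Real.exp (lam * a) * f u :=
        integral_mono (integrable_exp_mul_of_forall_notMem_Icc hlam hf0 hf hfi).integrableOn
          (hfi.const_mul _).integrableOn (exp_mul_mul_le_of_forall_notMem_Icc hlam hf0 hf)
    _ = Real.exp (lam * a) := by rw [integral_const_mul, hf1, mul_one]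

end Density

lemma setIntegral_univ_pi_Icc_prod {ι : Type*} [Fintype ι] (c : ι → ℝ → ℝ) (a : ℝ)
    (hc : ∀ j, ∀ b ∉ Set.Icc 0 a, c j b = 0) :
    ∫ β : ι → ℝ in Set.univ.pi fun _ => Set.Icc 0 a, ∏ j, c j (β j) = ∏ j, ∫ b, c j b := by
  rw [setIntegral_eq_integral_of_forall_compl_eq_zero, integral_fintype_prod_volume_eq_prod]
  intro β hβ
  simp only [Set.mem_pi, Set.mem_univ, forall_const, not_forall] at hβ
  obtain ⟨j, hj⟩ := hβ
  exact Finset.prod_eq_zero (Finset.mem_univ j) (hc j (β j) hj)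

lemma setIntegral_mul_le_of_le {α : Type*} [MeasurableSpace α] {μ : Measure α} {s : Set α}
    (hs : MeasurableSet s) {F w : α → ℝ} {C : ℝ} (hF0 : ∀ u ∈ s, 0 ≤ F u)
    (hFC : ∀ u ∈ s, F u ≤ C) (hw0 : ∀ u, 0 ≤ w u) (hw : IntegrableOn w s μ)
    (hw1 : ∫ u in s, w u ∂μ = 1) :
    ∫ u in s, F u * w u ∂μ ≤ C := by
  calc ∫ u in s, F u * w u ∂μ ≤ ∫ u in s, C * w u ∂μ := by
        refine integral_mono_of_nonneg ?_ (hw.const_mul C) ?_ <;>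
          filter_upwards [ae_restrict_mem hs] with u hu
        · exact mul_nonneg (hF0 u hu) (hw0 u)
        · exact mul_le_mul_of_nonneg_right (hFC u hu) (hw0 u)
    _ = C := by rw [integral_const_mul, hw1, mul_one]

lemma setIntegral_mul_prod_density_le {ι : Type*} [Fintype ι] {g : ℝ → ℝ} {δ : ℝ}
    (hg_nonneg : ∀ u, 0 ≤ g u) (hg_supp : ∀ u ∉ Set.Icc 0 δ, g u = 0)
    (hg_int : ∫ u in Set.Ioi 0, g u = 1) {F : (ι → ℝ) → ℝ} {C : ℝ}
    (hF0 : ∀ u ∈ Set.univ.pi fun _ => Set.Icc 0 δ, 0 ≤ F u)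
    (hFC : ∀ u ∈ Set.univ.pi fun _ => Set.Icc 0 δ, F u ≤ C) :
    ∫ u in Set.univ.pi fun _ => Set.Icc 0 δ, F u * ∏ i, g (u i) ≤ C := by
  refine setIntegral_mul_le_of_le (MeasurableSet.univ_pi fun _ => measurableSet_Icc) hF0 hFC
    (fun _ => Finset.prod_nonneg fun _ _ => hg_nonneg _)
    (Integrable.fintype_prod fun _ =>
      integrable_of_setIntegral_Ioi_eq_one hg_supp hg_int).integrableOn ?_
  rw [setIntegral_univ_pi_Icc_prod (fun _ => g) δ fun _ => hg_supp,
    integral_eq_setIntegral_Ioi_of_forall_notMem_Icc hg_supp, hg_int, Finset.prod_const_one]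

lemma emb_mem {k : ℕ} {S : Finset (Fin (2*k))} {u : {i // i ∈ S} → ℝ} {s : Set ℝ}
    (h0 : (0:ℝ) ∈ s) (hu : ∀ j, u j ∈ s) (i : Fin (2*k)) : emb S u i ∈ s := by
  unfold emb
  split_ifs
  exacts [hu _, h0]

lemma prod_emb {k : ℕ} (S : Finset (Fin (2*k))) (u : {i // i ∈ S} → ℝ)
    (F : Fin (2*k) → ℝ → ℝ) (hF : ∀ i, F i 0 = 1) :
    ∏ i, F i (emb S u i) = ∏ j : {i // i ∈ S}, F j (u j) := by
  rw [← Finset.prod_subset (subset_univ S) fun i _ hi => by simp [emb, hi, hF],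
    ← Finset.prod_coe_sort S]
  exact Finset.prod_congr rfl fun j _ => by simp [emb, j.2]

section Lyapunov

variable {lam0 Bmax Δ δ : ℝ} {L : ℕ}

lemma one_le_vfun (hlam : 0 ≤ lam0) (y : ℝ) : 1 ≤ vfun lam0 Bmax Δ δ L y :=
  Real.one_le_exp (mul_nonneg hlam (le_max_right _ _))

lemma vfun_mono (hlam : 0 ≤ lam0) : Monotone (vfun lam0 Bmax Δ δ L) := fun y z hyz => by
  unfold vfun
  gcongr

lemma vfun_add_le (hlam : 0 ≤ lam0) (y : ℝ) {b : ℝ} (hb : 0 ≤ b) :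
    vfun lam0 Bmax Δ δ L (y + b) ≤ vfun lam0 Bmax Δ δ L y * Real.exp (lam0 * b) := by
  unfold vfun
  rw [← Real.exp_add, ← mul_add]
  gcongr
  exact max_le (by linarith [le_max_left (y - Bmax * L + Δ + δ) 0])
    (add_nonneg (le_max_right _ _) hb)

lemma vfun_add_eq_one {y b : ℝ} (hy : y ≤ Bmax * L - 2 * Δ - δ) (hb : b ≤ Δ) :
    vfun lam0 Bmax Δ δ L (y + b) = 1 := by
  rw [vfun, max_eq_right (by linarith), mul_zero, Real.exp_zero]

lemma Vfun_nonneg {k : ℕ} (x : Fin (2*k) → ℝ) : 0 ≤ Vfun lam0 Bmax Δ δ L x :=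
  Finset.prod_nonneg fun _ _ => (Real.exp_pos _).le

lemma Vfun_mono {k : ℕ} (hlam : 0 ≤ lam0) {x y : Fin (2*k) → ℝ} (hxy : x ≤ y) :
    Vfun lam0 Bmax Δ δ L x ≤ Vfun lam0 Bmax Δ δ L y :=
  Finset.prod_le_prod (fun _ _ => (Real.exp_pos _).le) fun i _ => vfun_mono hlam (hxy i)

lemma Vfun_add_le {k : ℕ} (hlam : 0 ≤ lam0) (r z : Fin (2*k) → ℝ)
    (hz : ∀ i, z i ∈ Set.Icc 0 Δ) :
    Vfun lam0 Bmax Δ δ L (r + z) ≤ Vfun lam0 Bmax Δ δ L r *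
      ∏ i, if i ∈ EL Bmax Δ δ L r then Real.exp (lam0 * z i) else 1 := by
  rw [Vfun, Vfun, ← Finset.prod_mul_distrib]
  refine Finset.prod_le_prod (fun _ _ => (Real.exp_pos _).le) fun i _ => ?_
  by_cases hi : i ∈ EL Bmax Δ δ L r
  · rw [if_pos hi]
    exact vfun_add_le hlam (r i) (hz i).1
  · rw [if_neg hi, mul_one, Pi.add_apply,
      vfun_add_eq_one (by simpa [EL] using hi) (hz i).2]
    exact one_le_vfun hlam _

end Lyapunov

section Lengthening

variable {k : ℕ} {lam0 Bmax Δ δ : ℝ} {L : ℕ} {h : ℝ → ℝ → ℝ}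

lemma lengtheningIntegral_nonneg (hh_nonneg : ∀ y u, 0 ≤ h y u) (r : Fin (2*k) → ℝ)
    (J : Finset (Fin (2*k))) : 0 ≤ lengtheningIntegral lam0 Bmax Δ δ L h r J :=
  integral_nonneg fun _ => mul_nonneg
    (mul_nonneg (Vfun_nonneg _) (Set.indicator_nonneg (fun _ _ => zero_le_one) _))
    (Finset.prod_nonneg fun _ _ => hh_nonneg _ _)

lemma lengtheningIntegral_le (hlam : 0 ≤ lam0) (hΔ : 0 ≤ Δ) (hh_nonneg : ∀ y u, 0 ≤ h y u)
    (hh_supp : ∀ y, ∀ u ∉ Set.Icc 0 Δ, h y u = 0) (hh_int : ∀ y, ∫ u in Set.Ioi 0, h y u = 1)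
    (r : Fin (2*k) → ℝ) (J : Finset (Fin (2*k))) :
    lengtheningIntegral lam0 Bmax Δ δ L h r J ≤
      Vfun lam0 Bmax Δ δ L r * ∏ i ∈ J ∩ EL Bmax Δ δ L r, expMoment lam0 (h (r i)) := by
  set E := EL Bmax Δ δ L r
  let tilt : Fin (2*k) → ℝ → ℝ := fun i b => if i ∈ E then Real.exp (lam0 * b) else 1
  have hint : ∀ y, Integrable (h y) := fun y =>
    integrable_of_setIntegral_Ioi_eq_one (hh_supp y) (hh_int y)
  have htilt_int : ∀ i y, Integrable fun b => tilt i b * h y b := fun i y => by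
    simp only [tilt]
    split_ifs
    · exact integrable_exp_mul_of_forall_notMem_Icc hlam (hh_nonneg y) (hh_supp y) (hint y)
    · simpa using hint y
  have htilt_integral :
      ∀ i y, ∫ b, tilt i b * h y b = if i ∈ E then expMoment lam0 (h y) else 1 :=
    fun i y => by
      simp only [tilt]
      split_ifs
      · exact integral_eq_setIntegral_Ioi_of_forall_notMem_Icc fun u hu => by
          rw [hh_supp y u hu, mul_zero]
      · simpa [integral_eq_setIntegral_Ioi_of_forall_notMem_Icc (hh_supp y)] using hh_int y
  have hbox : MeasurableSet (Set.univ.pi fun _ : {i // i ∈ J} => Set.Icc (0:ℝ) Δ) :=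
    MeasurableSet.univ_pi fun _ => measurableSet_Icc
  calc lengtheningIntegral lam0 Bmax Δ δ L h r J
      ≤ ∫ β in Set.univ.pi fun _ : {i // i ∈ J} => Set.Icc (0:ℝ) Δ,
          Vfun lam0 Bmax Δ δ L r * ∏ j : {i // i ∈ J}, tilt j (β j) * h (r j) (β j) := by
        refine integral_mono_of_nonneg
          (Filter.Eventually.of_forall fun β => ?_) ?_ ?_
        · exact mul_nonneg
            (mul_nonneg (Vfun_nonneg _) (Set.indicator_nonneg (fun _ _ => zero_le_one) _))
            (Finset.prod_nonneg fun _ _ => hh_nonneg _ _)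
        · exact ((Integrable.fintype_prod fun j : {i // i ∈ J} =>
            htilt_int j (r j)).const_mul _).integrableOn
        filter_upwards [ae_restrict_mem hbox] with β hβ
        have hVβ := Vfun_add_le (Bmax := Bmax) (δ := δ) (L := L) hlam r (emb J β)
          (emb_mem ⟨le_rfl, hΔ⟩ fun j => hβ j (Set.mem_univ j))
        rw [prod_emb J β tilt fun i => by simp [tilt]] at hVβ
        have hind : Set.indicator {y : Fin (2*k) → ℝ | ∀ i, 0 ≤ y i} (fun _ => (1:ℝ))
            (r + emb J β) ≤ 1 := Set.indicator_le_self' (fun _ _ => zero_le_one) _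
        have hh0 : 0 ≤ ∏ j : {i // i ∈ J}, h (r j) (β j) :=
          Finset.prod_nonneg fun _ _ => hh_nonneg _ _
        calc (Vfun lam0 Bmax Δ δ L (r + emb J β) *
              Set.indicator {y | ∀ i, 0 ≤ y i} (fun _ => 1) (r + emb J β)) *
                ∏ j : {i // i ∈ J}, h (r j) (β j)
            ≤ Vfun lam0 Bmax Δ δ L (r + emb J β) * ∏ j : {i // i ∈ J}, h (r j) (β j) := by
              gcongr
              exact mul_le_of_le_one_right (Vfun_nonneg _) hind
          _ ≤ (Vfun lam0 Bmax Δ δ L r * ∏ j : {i // i ∈ J}, tilt j (β j)) *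
                ∏ j : {i // i ∈ J}, h (r j) (β j) := by gcongr
          _ = _ := by rw [mul_assoc, ← Finset.prod_mul_distrib]
    _ = Vfun lam0 Bmax Δ δ L r * ∏ j : {i // i ∈ J}, ∫ b, tilt j b * h (r j) b := by
        rw [integral_const_mul, setIntegral_univ_pi_Icc_prod
          (fun (j : {i // i ∈ J}) b => tilt j b * h (r j) b) Δ
          fun j b hb => by rw [hh_supp _ b hb, mul_zero]]
    _ = Vfun lam0 Bmax Δ δ L r * ∏ i ∈ J ∩ E, expMoment lam0 (h (r i)) := by
        simp only [htilt_integral]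
        rw [← Finset.prod_ite_mem, ← Finset.prod_coe_sort J]

end Lengthening

section Lambda

variable {k : ℕ} {Bmax Δ δ : ℝ} {L : ℕ} {h : ℝ → ℝ → ℝ} {lam : ℝ}
  {p : Finset (Fin (2*k)) × Finset (Fin (2*k)) → (Fin (2*k) → ℝ) → (Fin (2*k) → ℝ) → ℝ}

lemma Lambda_nonneg (hp0 : ∀ JM ∈ Jk k, ∀ r s, 0 ≤ p JM r s)
    (hm0 : ∀ y, 0 ≤ expMoment lam (h y)) : 0 ≤ Lambda k Bmax Δ δ p h lam L :=
  Real.iSup_nonneg fun _ => Finset.sum_nonneg fun JM hJM =>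
    mul_nonneg (hp0 JM hJM _ _) (Finset.prod_nonneg fun _ _ => hm0 _)

/-- `C ^ (2k)` bounds the family whose supremum is `Λ` (an unbounded `⨆` is junk `0`). -/
lemma sum_le_Lambda (hp0 : ∀ JM ∈ Jk k, ∀ r s, 0 ≤ p JM r s)
    (hp_sum : ∀ r s, ∑ JM ∈ Jk k, p JM r s = 1) {C : ℝ} (hC : 1 ≤ C)
    (hm0 : ∀ y, 0 ≤ expMoment lam (h y)) (hmC : ∀ y, expMoment lam (h y) ≤ C)
    (r s : Fin (2*k) → ℝ) :
    ∑ JM ∈ Jk k, p JM r s * ∏ i ∈ JM.1 ∩ EL Bmax Δ δ L r, expMoment lam (h (r i)) ≤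
      Lambda k Bmax Δ δ p h lam L := by
  have hprod : ∀ (r : Fin (2*k) → ℝ) (S : Finset (Fin (2*k))),
      ∏ i ∈ S, expMoment lam (h (r i)) ≤ C ^ (2*k) := fun r S =>
    calc ∏ i ∈ S, expMoment lam (h (r i)) ≤ C ^ S.card := by
          rw [← Finset.prod_const]
          exact Finset.prod_le_prod (fun _ _ => hm0 _) fun _ _ => hmC _
      _ ≤ C ^ (2*k) := pow_le_pow_right₀ hC ((card_le_univ S).trans_eq (Fintype.card_fin _))
  refine le_ciSup (f := fun rs : (Fin (2*k) → ℝ) × (Fin (2*k) → ℝ) =>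
    ∑ JM ∈ Jk k, p JM rs.1 rs.2 * ∏ i ∈ JM.1 ∩ EL Bmax Δ δ L rs.1, expMoment lam (h (rs.1 i)))
    ⟨C ^ (2*k), Set.forall_mem_range.2 fun rs => ?_⟩ (r, s)
  calc ∑ JM ∈ Jk k, p JM rs.1 rs.2 * ∏ i ∈ JM.1 ∩ EL Bmax Δ δ L rs.1, expMoment lam (h (rs.1 i))
      ≤ ∑ JM ∈ Jk k, p JM rs.1 rs.2 * C ^ (2*k) :=
        Finset.sum_le_sum fun JM hJM => mul_le_mul_of_nonneg_left (hprod _ _) (hp0 JM hJM _ _)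
    _ = C ^ (2*k) := by rw [← Finset.sum_mul, hp_sum, one_mul]

lemma sum_lengtheningIntegral_nonneg (hp0 : ∀ JM ∈ Jk k, ∀ r s, 0 ≤ p JM r s)
    (hh_nonneg : ∀ y u, 0 ≤ h y u) (r s : Fin (2*k) → ℝ) :
    0 ≤ ∑ JM ∈ Jk k, p JM r s * lengtheningIntegral lam Bmax Δ δ L h r JM.1 :=
  Finset.sum_nonneg fun JM hJM =>
    mul_nonneg (hp0 JM hJM r s) (lengtheningIntegral_nonneg hh_nonneg r JM.1)

lemma sum_lengtheningIntegral_le (hp0 : ∀ JM ∈ Jk k, ∀ r s, 0 ≤ p JM r s)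
    (hp_sum : ∀ r s, ∑ JM ∈ Jk k, p JM r s = 1) (hlam : 0 ≤ lam) (hΔ : 0 ≤ Δ)
    (hh_nonneg : ∀ y u, 0 ≤ h y u) (hh_supp : ∀ y, ∀ u ∉ Set.Icc 0 Δ, h y u = 0)
    (hh_int : ∀ y, ∫ u in Set.Ioi 0, h y u = 1) (r s : Fin (2*k) → ℝ) :
    ∑ JM ∈ Jk k, p JM r s * lengtheningIntegral lam Bmax Δ δ L h r JM.1 ≤
      Lambda k Bmax Δ δ p h lam L * Vfun lam Bmax Δ δ L r := by
  have hm0 : ∀ y, 0 ≤ expMoment lam (h y) := fun y => expMoment_nonneg lam (hh_nonneg y)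
  calc ∑ JM ∈ Jk k, p JM r s * lengtheningIntegral lam Bmax Δ δ L h r JM.1
      ≤ ∑ JM ∈ Jk k, p JM r s *
          (Vfun lam Bmax Δ δ L r * ∏ i ∈ JM.1 ∩ EL Bmax Δ δ L r, expMoment lam (h (r i))) :=
        Finset.sum_le_sum fun JM hJM => mul_le_mul_of_nonneg_left
          (lengtheningIntegral_le hlam hΔ hh_nonneg hh_supp hh_int r JM.1) (hp0 JM hJM r s)
    _ = (∑ JM ∈ Jk k, p JM r s * ∏ i ∈ JM.1 ∩ EL Bmax Δ δ L r, expMoment lam (h (r i))) *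
          Vfun lam Bmax Δ δ L r := by
        rw [Finset.sum_mul]
        exact Finset.sum_congr rfl fun _ _ => by ring
    _ ≤ Lambda k Bmax Δ δ p h lam L * Vfun lam Bmax Δ δ L r := by
        gcongr
        · exact Vfun_nonneg r
        · exact sum_le_Lambda hp0 hp_sum (Real.one_le_exp (by positivity)) hm0
            (fun y => expMoment_le hlam (hh_nonneg y) (hh_supp y) (hh_int y)) r s

end Lambda

theorem statement0_general
    (k : ℕ)
    (δ Δ Bmax : ℝ) (hΔ : 0 < Δ)
    (p : Finset (Fin (2*k)) × Finset (Fin (2*k)) → (Fin (2*k) → ℝ) → (Fin (2*k) → ℝ) → ℝ)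
    (hp_mem : ∀ JM ∈ Jk k, ∀ r s : Fin (2*k) → ℝ, p JM r s ∈ Set.Icc (0:ℝ) 1)
    (hp_sum : ∀ r s : Fin (2*k) → ℝ, ∑ JM ∈ Jk k, p JM r s = 1)
    (Δx : ℝ → ℝ) (hΔx : ∀ x, Δx x ∈ Set.Ioc (0:ℝ) Δ)
    (h : ℝ → ℝ → ℝ)
    (hh_nonneg : ∀ x u, 0 ≤ h x u)
    (hh_int : ∀ x, ∫ u in Set.Ioi (0:ℝ), h x u = 1)
    (hh_supp : ∀ x u, u ∉ Set.Icc (0:ℝ) (Δx x) → h x u = 0)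
    (g : ℝ → ℝ) (hg_nonneg : ∀ u, 0 ≤ g u)
    (hg_int : ∫ u in Set.Ioi (0:ℝ), g u = 1)
    (hg_supp : ∀ u, u ∉ Set.Icc (0:ℝ) δ → g u = 0)
    (lam0 : ℝ) (hlam0 : 0 < lam0) (L : ℕ)
    (ε₁ : ℝ)
    (hε₁ : ε₁ = (1 + ∫ u in Set.Ioi (0:ℝ), Real.exp (-lam0 * u) * g u) *
        Lambda k Bmax Δ δ p h lam0 L - 1)
    (x : Fin (2*k) → ℝ)
    (I : Finset (Fin (2*k))) :
    (∫ u : {i // i ∈ I} → ℝ in Set.univ.pi fun _ => Set.Icc (0:ℝ) δ,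
      (∫ u' : {i // i ∈ Iᶜ} → ℝ in Set.univ.pi fun _ => Set.Icc (0:ℝ) δ,
        (∑ JM ∈ Jk k,
          p JM (x - emb I u) (x - emb Iᶜ u') *
            ∫ β : {i // i ∈ JM.1} → ℝ in Set.univ.pi fun _ => Set.Icc (0:ℝ) Δ,
              (Vfun lam0 Bmax Δ δ L (x - emb I u + emb JM.1 β) *
                  Set.indicator {y : Fin (2*k) → ℝ | ∀ i, 0 ≤ y i} (fun _ => (1:ℝ))
                    (x - emb I u + emb JM.1 β)) *
                ∏ j : {i // i ∈ JM.1}, h ((x - emb I u) j.1) (β j)) *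
          ∏ i' : {i // i ∈ Iᶜ}, g (u' i')) *
        ∏ i : {i // i ∈ I}, g (u i)) ≤
      (1 + ε₁) * Vfun lam0 Bmax Δ δ L x := by
  have hp0 : ∀ JM ∈ Jk k, ∀ r s, 0 ≤ p JM r s := fun JM hJM r s => (hp_mem JM hJM r s).1
  have hh_suppΔ : ∀ y, ∀ u ∉ Set.Icc 0 Δ, h y u = 0 := fun y u hu =>
    hh_supp y u fun hu' => hu ⟨hu'.1, hu'.2.trans (hΔx y).2⟩
  set Λ := Lambda k Bmax Δ δ p h lam0 L
  have hΛ0 : 0 ≤ Λ := Lambda_nonneg hp0 fun y => expMoment_nonneg lam0 (hh_nonneg y)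
  have hΛ : Λ ≤ 1 + ε₁ := by
    rw [hε₁, add_sub_cancel]
    exact le_mul_of_one_le_left hΛ0 (le_add_of_nonneg_right (expMoment_nonneg _ hg_nonneg))
  have hinner : ∀ u ∈ Set.univ.pi fun _ : {i // i ∈ I} => Set.Icc (0:ℝ) δ,
      ∫ u' : {i // i ∈ Iᶜ} → ℝ in Set.univ.pi fun _ => Set.Icc (0:ℝ) δ,
        (∑ JM ∈ Jk k, p JM (x - emb I u) (x - emb Iᶜ u') *
          lengtheningIntegral lam0 Bmax Δ δ L h (x - emb I u) JM.1) * ∏ i', g (u' i') ≤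
        Λ * Vfun lam0 Bmax Δ δ L x := by
    intro u hu
    have hshort : x - emb I u ≤ x := fun i =>
      sub_le_self _ (emb_mem (s := Set.Ici 0) (Set.mem_Ici.2 le_rfl) (fun j => (hu j trivial).1) i)
    calc _ ≤ Λ * Vfun lam0 Bmax Δ δ L (x - emb I u) :=
          setIntegral_mul_prod_density_le hg_nonneg hg_supp hg_int
            (fun _ _ => sum_lengtheningIntegral_nonneg hp0 hh_nonneg _ _)
            (fun _ _ => sum_lengtheningIntegral_le hp0 hp_sum hlam0.le hΔ.le hh_nonneg hh_suppΔ
              hh_int _ _)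
      _ ≤ Λ * Vfun lam0 Bmax Δ δ L x := by gcongr; exact Vfun_mono hlam0.le hshort
  calc _ ≤ Λ * Vfun lam0 Bmax Δ δ L x :=
        setIntegral_mul_prod_density_le hg_nonneg hg_supp hg_int
          (fun _ _ => integral_nonneg fun _ => mul_nonneg
            (sum_lengtheningIntegral_nonneg hp0 hh_nonneg _ _)
            (Finset.prod_nonneg fun _ _ => hg_nonneg _))
          hinner
    _ ≤ (1 + ε₁) * Vfun lam0 Bmax Δ δ L x := mul_le_mul_of_nonneg_right hΛ (Vfun_nonneg x)

theorem statement0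
    (k : ℕ) (hk : 0 < k)
    (δ Δ Bmax : ℝ) (hδ : 0 < δ) (hΔ : 0 < Δ) (hB : Δ + δ < Bmax)
    (p : Finset (Fin (2*k)) × Finset (Fin (2*k)) → (Fin (2*k) → ℝ) → (Fin (2*k) → ℝ) → ℝ)
    (hp_meas : ∀ JM, Measurable fun rs : (Fin (2*k) → ℝ) × (Fin (2*k) → ℝ) => p JM rs.1 rs.2)
    (hp_mem : ∀ JM ∈ Jk k, ∀ r s : Fin (2*k) → ℝ, p JM r s ∈ Set.Icc (0:ℝ) 1)
    (hp_sum : ∀ r s : Fin (2*k) → ℝ, ∑ JM ∈ Jk k, p JM r s = 1)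
    (Δx : ℝ → ℝ) (hΔx : ∀ x, Δx x ∈ Set.Ioc (0:ℝ) Δ)
    (h : ℝ → ℝ → ℝ)
    (hh_meas : Measurable (Function.uncurry h))
    (hh_nonneg : ∀ x u, 0 ≤ h x u)
    (hh_int : ∀ x, ∫ u in Set.Ioi (0:ℝ), h x u = 1)
    (hh_supp : ∀ x u, u ∉ Set.Icc (0:ℝ) (Δx x) → h x u = 0)
    (g : ℝ → ℝ) (hg_meas : Measurable g) (hg_nonneg : ∀ u, 0 ≤ g u)
    (hg_int : ∫ u in Set.Ioi (0:ℝ), g u = 1)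
    (hg_supp : ∀ u, u ∉ Set.Icc (0:ℝ) δ → g u = 0)
    (lam0 : ℝ) (hlam0 : 0 < lam0) (L : ℕ) (hL : 0 < L)
    (ε₁ : ℝ)
    (hε₁ : ε₁ = (1 + ∫ u in Set.Ioi (0:ℝ), Real.exp (-lam0 * u) * g u) *
        Lambda k Bmax Δ δ p h lam0 L - 1)
    (x : Fin (2*k) → ℝ) (hx : ∀ i, 0 ≤ x i)
    (I : Finset (Fin (2*k))) (hI : I ∈ Ik k) :
    (∫ u : {i // i ∈ I} → ℝ in Set.univ.pi fun _ => Set.Icc (0:ℝ) δ,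
      (∫ u' : {i // i ∈ Iᶜ} → ℝ in Set.univ.pi fun _ => Set.Icc (0:ℝ) δ,
        (∑ JM ∈ Jk k,
          p JM (x - emb I u) (x - emb Iᶜ u') *
            ∫ β : {i // i ∈ JM.1} → ℝ in Set.univ.pi fun _ => Set.Icc (0:ℝ) Δ,
              (Vfun lam0 Bmax Δ δ L (x - emb I u + emb JM.1 β) *
                  Set.indicator {y : Fin (2*k) → ℝ | ∀ i, 0 ≤ y i} (fun _ => (1:ℝ))
                    (x - emb I u + emb JM.1 β)) *
                ∏ j : {i // i ∈ JM.1}, h ((x - emb I u) j.1) (β j)) *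
          ∏ i' : {i // i ∈ Iᶜ}, g (u' i')) *
        ∏ i : {i // i ∈ I}, g (u i)) ≤
      (1 + ε₁) * Vfun lam0 Bmax Δ δ L x :=
  statement0_general k δ Δ Bmax hΔ p hp_mem hp_sum Δx hΔx h hh_nonneg hh_int hh_supp g hg_nonneg
    hg_int hg_supp lam0 hlam0 L ε₁ hε₁ x I
end
end

section
/- For every x ∈ ℝ₊^{2k} and every I ∈ 𝓘_k: ∫_{[0,δ]^I} 𝒱(x − ι_I u) ∏_{i∈I} g(u_i) du ≤ ( 1{∀ i ∈ I : x_i ≤ B_max·L − Δ} + 𝓛(g)(λ₀) · 1{∃ i ∈ I : x_i > B_max·L − Δ} ) · 𝒱(x). (Step 2 inequality in the proof of Proposition 5.1.) -/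
open MeasureTheory Finset

noncomputable section

/-! Coordinatewise, `v (y - t) ≤ v y` for a shift `t ≥ 0`, and when `y > B_max L - Δ` a shift
`t ≤ δ` stays in the region where `v` is exponential, so `v (y - t) = e^{-λ₀ t} v y`. Bounding the
integrand by a product of one-dimensional functions, the integral factorises (Fubini); each factor
is `∫ g = 1` or `𝓛(g)(λ₀) ≤ 1`, and the product is at most `𝓛(g)(λ₀)` as soon as one coordinate
of `x` on `I` is large. -/

/-- With `a = B_max L - Δ`, the factor by which shifting the argument `y` of `v` down by `t`
multiplies `v y` at most. -/
def shiftFactor (lam0 a y t : ℝ) : ℝ :=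
  if a < y then Real.exp (-lam0 * t) else 1

lemma shiftFactor_zero (lam0 a y : ℝ) : shiftFactor lam0 a y 0 = 1 := by
  simp [shiftFactor]

lemma continuous_shiftFactor (lam0 a y : ℝ) : Continuous (shiftFactor lam0 a y) := by
  unfold shiftFactor
  split_ifs <;> fun_prop

section Lyapunov

variable {lam0 Bmax Δ δ : ℝ} {L : ℕ}

lemma vfun_pos (y : ℝ) : 0 < vfun lam0 Bmax Δ δ L y :=
  Real.exp_pos _

lemma vfun_sub_le (hlam0 : 0 ≤ lam0) {y t : ℝ} (ht : t ∈ Set.Icc 0 δ) :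
    vfun lam0 Bmax Δ δ L (y - t) ≤
      shiftFactor lam0 (Bmax * L - Δ) y t * vfun lam0 Bmax Δ δ L y := by
  obtain ⟨ht0, htδ⟩ := ht
  unfold shiftFactor vfun
  split_ifs with hy
  · rw [← Real.exp_add, max_eq_left (by linarith), max_eq_left (by linarith)]
    exact le_of_eq (by ring_nf)
  · rw [one_mul]
    gcongr
    linarith

lemma Vfun_pos {k : ℕ} (x : Fin (2*k) → ℝ) : 0 < Vfun lam0 Bmax Δ δ L x :=
  Finset.prod_pos fun _ _ => vfun_pos _

lemma emb_apply_mem {k : ℕ} {S : Finset (Fin (2*k))} {s : Set ℝ} (h0 : (0 : ℝ) ∈ s)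
    {u : {i // i ∈ S} → ℝ} (hu : ∀ j, u j ∈ s) (i : Fin (2*k)) : emb S u i ∈ s := by
  unfold emb
  split_ifs
  exacts [hu _, h0]

lemma prod_apply_emb {k : ℕ} (S : Finset (Fin (2*k))) (u : {i // i ∈ S} → ℝ)
    {f : Fin (2*k) → ℝ → ℝ} (hf : ∀ i, f i 0 = 1) :
    ∏ i, f i (emb S u i) = ∏ j : {i // i ∈ S}, f j (u j) := by
  rw [← Finset.prod_subset (Finset.subset_univ S) fun i _ hi => by simp [emb, hi, hf],
    ← Finset.prod_coe_sort]
  exact Finset.prod_congr rfl fun j _ => by simp [emb, j.2]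

lemma Vfun_sub_emb_le (hlam0 : 0 ≤ lam0) (hδ : 0 ≤ δ) {k : ℕ} (x : Fin (2*k) → ℝ)
    {S : Finset (Fin (2*k))} {u : {i // i ∈ S} → ℝ} (hu : ∀ j, u j ∈ Set.Icc 0 δ) :
    Vfun lam0 Bmax Δ δ L (x - emb S u) ≤
      (∏ j : {i // i ∈ S}, shiftFactor lam0 (Bmax * L - Δ) (x j) (u j)) *
        Vfun lam0 Bmax Δ δ L x :=
  calc Vfun lam0 Bmax Δ δ L (x - emb S u)
      ≤ ∏ i, shiftFactor lam0 (Bmax * L - Δ) (x i) (emb S u i) * vfun lam0 Bmax Δ δ L (x i) :=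
        Finset.prod_le_prod (fun _ _ => (vfun_pos _).le) fun i _ =>
          vfun_sub_le hlam0 (emb_apply_mem (Set.left_mem_Icc.mpr hδ) hu i)
    _ = _ := by
        rw [Finset.prod_mul_distrib, prod_apply_emb S u fun i => shiftFactor_zero _ _ _]
        rfl

lemma Vfun_sub_emb_mul_prod_le (hlam0 : 0 ≤ lam0) (hδ : 0 ≤ δ) {k : ℕ} (x : Fin (2*k) → ℝ)
    {S : Finset (Fin (2*k))} {u : {i // i ∈ S} → ℝ} (hu : ∀ j, u j ∈ Set.Icc 0 δ)
    {g : ℝ → ℝ} (hg : ∀ t, 0 ≤ g t) :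
    Vfun lam0 Bmax Δ δ L (x - emb S u) * ∏ j : {i // i ∈ S}, g (u j) ≤
      Vfun lam0 Bmax Δ δ L x *
        ∏ j : {i // i ∈ S}, shiftFactor lam0 (Bmax * L - Δ) (x j) (u j) * g (u j) :=
  calc _ ≤ ((∏ j : {i // i ∈ S}, shiftFactor lam0 (Bmax * L - Δ) (x j) (u j)) *
        Vfun lam0 Bmax Δ δ L x) * ∏ j : {i // i ∈ S}, g (u j) :=
        mul_le_mul_of_nonneg_right (Vfun_sub_emb_le hlam0 hδ x hu)
          (Finset.prod_nonneg fun _ _ => hg _)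
    _ = _ := by
        rw [Finset.prod_mul_distrib]
        ring

end Lyapunov

lemma setIntegral_univ_pi_le_mul_prod {ι : Type*} [Fintype ι] {X : ι → Type*}
    [∀ i, MeasureSpace (X i)] [∀ i, SigmaFinite (volume : Measure (X i))]
    {s : ∀ i, Set (X i)} (hs : ∀ i, MeasurableSet (s i)) {F : (∀ i, X i) → ℝ}
    {f : ∀ i, X i → ℝ} (hf : ∀ i, IntegrableOn (f i) (s i)) {C : ℝ}
    (hF0 : ∀ u ∈ Set.univ.pi s, 0 ≤ F u) (hFf : ∀ u ∈ Set.univ.pi s, F u ≤ C * ∏ i, f i (u i)) :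
    ∫ u in Set.univ.pi s, F u ≤ C * ∏ i, ∫ t in s i, f i t := by
  have hpi : MeasurableSet (Set.univ.pi s) := MeasurableSet.univ_pi hs
  have hmeas : (volume : Measure (∀ i, X i)).restrict (Set.univ.pi s) =
      Measure.pi fun i => (volume : Measure (X i)).restrict (s i) := by
    rw [volume_pi, Measure.restrict_pi_pi]
  have hint : Integrable (fun u => ∏ i, f i (u i)) ((volume : Measure (∀ i, X i)).restrict
      (Set.univ.pi s)) := by
    rw [hmeas]
    exact Integrable.fintype_prod_dep hf
  calc ∫ u in Set.univ.pi s, F u ≤ ∫ u in Set.univ.pi s, C * ∏ i, f i (u i) :=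
        integral_mono_of_nonneg (ae_restrict_of_forall_mem hpi hF0) (hint.const_mul C)
          (ae_restrict_of_forall_mem hpi hFf)
    _ = C * ∏ i, ∫ t in s i, f i t := by
        rw [integral_const_mul, hmeas, integral_fintype_prod_eq_prod]

lemma setIntegral_Ioi_eq_setIntegral_Icc {f : ℝ → ℝ} {a b : ℝ}
    (hf : ∀ t, t ∉ Set.Icc a b → f t = 0) :
    ∫ t in Set.Ioi a, f t = ∫ t in Set.Icc a b, f t := by
  rw [setIntegral_congr_set Ioi_ae_eq_Ici,
    setIntegral_eq_integral_of_forall_compl_eq_zero (s := Set.Ici a)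
      fun t ht => hf t fun h => ht h.1,
    setIntegral_eq_integral_of_forall_compl_eq_zero hf]

section Laplace

variable {g : ℝ → ℝ} {δ : ℝ} (hg_int : ∫ t in Set.Ioi (0:ℝ), g t = 1)
include hg_int

lemma setIntegral_exp_mul_le_one {lam0 : ℝ} (hlam0 : 0 ≤ lam0) (hg : ∀ t, 0 ≤ g t) :
    ∫ t in Set.Ioi (0:ℝ), Real.exp (-lam0 * t) * g t ≤ 1 :=
  hg_int ▸ integral_mono_of_nonneg
    (ae_of_all _ fun t => mul_nonneg (Real.exp_pos _).le (hg t))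
    (Integrable.of_integral_ne_zero (by simp [hg_int]))
    (ae_restrict_of_forall_mem measurableSet_Ioi fun t (ht : 0 < t) =>
      mul_le_of_le_one_left (hg t) (Real.exp_le_one_iff.mpr (by nlinarith)))

lemma integrableOn_Icc_of_setIntegral_Ioi_eq_one : IntegrableOn g (Set.Icc 0 δ) := by
  have hIoi : IntegrableOn g (Set.Ioi 0) := Integrable.of_integral_ne_zero (by simp [hg_int])
  exact (Iff.mpr integrableOn_Ici_iff_integrableOn_Ioi hIoi).mono_set Set.Icc_subset_Ici_self

lemma setIntegral_Icc_shiftFactor_mul (hg_supp : ∀ t, t ∉ Set.Icc 0 δ → g t = 0)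
    (lam0 a y : ℝ) :
    ∫ t in Set.Icc 0 δ, shiftFactor lam0 a y t * g t =
      if a < y then ∫ t in Set.Ioi (0:ℝ), Real.exp (-lam0 * t) * g t else 1 := by
  unfold shiftFactor
  split_ifs
  · exact (setIntegral_Ioi_eq_setIntegral_Icc fun t ht => by simp [hg_supp t ht]).symm
  · simpa only [one_mul, hg_int] using (setIntegral_Ioi_eq_setIntegral_Icc hg_supp).symm

end Laplace

lemma prod_ite_lt_le {ι α : Type*} [LinearOrder α] (s : Finset ι) (x : ι → α) (a : α) {c : ℝ}
    [Decidable (∀ i ∈ s, x i ≤ a)] [Decidable (∃ i ∈ s, a < x i)] (hc0 : 0 ≤ c) (hc1 : c ≤ 1) :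
    ∏ i ∈ s, (if a < x i then c else 1) ≤
      (if ∀ i ∈ s, x i ≤ a then (1:ℝ) else 0) + c * (if ∃ i ∈ s, a < x i then (1:ℝ) else 0) := by
  classical
  by_cases hlarge : ∃ i ∈ s, a < x i
  · obtain ⟨i, hi, hxi⟩ := hlarge
    have hsmall : ¬ ∀ j ∈ s, x j ≤ a := fun h => (h i hi).not_gt hxi
    rw [if_neg hsmall, if_pos ⟨i, hi, hxi⟩, zero_add, mul_one, ← Finset.mul_prod_erase s _ hi,
      if_pos hxi]
    refine mul_le_of_le_one_right hc0 (Finset.prod_le_one (fun j _ => ?_) fun j _ => ?_)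
    all_goals split_ifs <;> linarith
  · have hsmall : ∀ j ∈ s, x j ≤ a := fun j hj => not_lt.mp fun h => hlarge ⟨j, hj, h⟩
    rw [if_pos hsmall, if_neg hlarge, Finset.prod_eq_one fun j hj => if_neg (hsmall j hj).not_gt]
    simp

theorem statement3_general
    (k : ℕ)
    (δ Δ Bmax : ℝ) (hδ : 0 < δ)
    (g : ℝ → ℝ) (hg_nonneg : ∀ u, 0 ≤ g u)
    (hg_int : ∫ u in Set.Ioi (0:ℝ), g u = 1)
    (hg_supp : ∀ u, u ∉ Set.Icc (0:ℝ) δ → g u = 0)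
    (lam0 : ℝ) (hlam0 : 0 < lam0) (L : ℕ)
    (x : Fin (2*k) → ℝ)
    (I : Finset (Fin (2*k))) :
    (∫ u : {i // i ∈ I} → ℝ in Set.univ.pi fun _ => Set.Icc (0:ℝ) δ,
        Vfun lam0 Bmax Δ δ L (x - emb I u) * ∏ i : {i // i ∈ I}, g (u i)) ≤
      ((if ∀ i ∈ I, x i ≤ Bmax * (L:ℝ) - Δ then (1:ℝ) else 0) +
          (∫ u in Set.Ioi (0:ℝ), Real.exp (-lam0 * u) * g u) *
            (if ∃ i ∈ I, Bmax * (L:ℝ) - Δ < x i then (1:ℝ) else 0)) *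
        Vfun lam0 Bmax Δ δ L x := by
  set a := Bmax * (L:ℝ) - Δ
  set c := ∫ u in Set.Ioi (0:ℝ), Real.exp (-lam0 * u) * g u
  have hc0 : 0 ≤ c := setIntegral_nonneg measurableSet_Ioi fun t _ =>
    mul_nonneg (Real.exp_pos _).le (hg_nonneg t)
  have hc1 : c ≤ 1 := setIntegral_exp_mul_le_one hg_int hlam0.le hg_nonneg
  calc _ ≤ Vfun lam0 Bmax Δ δ L x *
        ∏ j : {i // i ∈ I}, ∫ t in Set.Icc 0 δ, shiftFactor lam0 a (x j) t * g t :=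
        setIntegral_univ_pi_le_mul_prod (fun _ => measurableSet_Icc)
          (fun _ => (integrableOn_Icc_of_setIntegral_Ioi_eq_one hg_int).continuousOn_mul
            (continuous_shiftFactor _ _ _).continuousOn isCompact_Icc)
          (fun _ _ => mul_nonneg (Vfun_pos _).le
            (Finset.prod_nonneg fun _ _ => hg_nonneg _))
          (fun _ hu => Vfun_sub_emb_mul_prod_le hlam0.le hδ.le x (fun j => hu j trivial) hg_nonneg)
    _ = Vfun lam0 Bmax Δ δ L x * ∏ i ∈ I, if a < x i then c else 1 := by
        rw [← Finset.prod_coe_sort I fun i => if a < x i then c else 1]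
        exact congrArg _ (Finset.prod_congr rfl fun j _ =>
          setIntegral_Icc_shiftFactor_mul hg_int hg_supp _ _ _)
    _ ≤ _ := by
        rw [mul_comm]
        exact mul_le_mul_of_nonneg_right (prod_ite_lt_le I x a hc0 hc1) (Vfun_pos x).le

theorem statement3
    (k : ℕ) (hk : 0 < k)
    (δ Δ Bmax : ℝ) (hδ : 0 < δ) (hΔ : 0 < Δ) (hB : Δ + δ < Bmax)
    (g : ℝ → ℝ) (hg_meas : Measurable g) (hg_nonneg : ∀ u, 0 ≤ g u)
    (hg_int : ∫ u in Set.Ioi (0:ℝ), g u = 1)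
    (hg_supp : ∀ u, u ∉ Set.Icc (0:ℝ) δ → g u = 0)
    (lam0 : ℝ) (hlam0 : 0 < lam0) (L : ℕ) (hL : 0 < L)
    (x : Fin (2*k) → ℝ) (hx : ∀ i, 0 ≤ x i)
    (I : Finset (Fin (2*k))) (hI : I ∈ Ik k) :
    (∫ u : {i // i ∈ I} → ℝ in Set.univ.pi fun _ => Set.Icc (0:ℝ) δ,
        Vfun lam0 Bmax Δ δ L (x - emb I u) * ∏ i : {i // i ∈ I}, g (u i)) ≤
      ((if ∀ i ∈ I, x i ≤ Bmax * (L:ℝ) - Δ then (1:ℝ) else 0) +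
          (∫ u in Set.Ioi (0:ℝ), Real.exp (-lam0 * u) * g u) *
            (if ∃ i ∈ I, Bmax * (L:ℝ) - Δ < x i then (1:ℝ) else 0)) *
        Vfun lam0 Bmax Δ δ L x :=
  statement3_general k δ Δ Bmax hδ g hg_nonneg hg_int hg_supp lam0 hlam0 L x I
end
end

section
/- Assume additionally that lim_{x → +∞} Δ_x = 0. Then for every λ > 0 and every ε > 0 there exists L ∈ ℕ* such that Λ(λ, L) ≤ 1 + ε. (Proposition: control of the Laplace transforms.) -/
open MeasureTheory Finset

noncomputable section

open Filter Topology

/-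
Near `+∞` the densities `h(x, ·)` are supported in `[0, Δ_x]` with `Δ_x → 0`, so their Laplace
transform at `λ` is at most `e^{λ Δ_x}`, which is close to `1`. Once `L` is so large that every
coordinate in `𝓔_L(r)` lies in that region, each product in `Λ(λ, L)` has at most `2k` factors,
all at most `e^{λη}` with `(e^{λη})^{2k} ≤ 1 + ε`, and the weights `p_{J,M}` sum to `1`.
-/

theorem setIntegral_Ioi_exp_mul_le {f : ℝ → ℝ} {a lam : ℝ} (hlam : 0 ≤ lam)
    (hf_nonneg : ∀ u, 0 ≤ f u) (hf_int : ∫ u in Set.Ioi (0:ℝ), f u = 1)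
    (hf_supp : ∀ u, u ∉ Set.Icc (0:ℝ) a → f u = 0) :
    ∫ u in Set.Ioi (0:ℝ), Real.exp (lam * u) * f u ≤ Real.exp (lam * a) := by
  have hf_integrable : IntegrableOn f (Set.Ioi 0) :=
    Integrable.of_integral_ne_zero (by rw [hf_int]; exact one_ne_zero)
  have hle : ∀ u, Real.exp (lam * u) * f u ≤ Real.exp (lam * a) * f u := by
    intro u
    by_cases hu : u ∈ Set.Icc (0:ℝ) a
    · exact mul_le_mul_of_nonneg_right (Real.exp_le_exp.2 (by nlinarith [hu.2])) (hf_nonneg u)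
    · simp [hf_supp u hu]
  calc ∫ u in Set.Ioi (0:ℝ), Real.exp (lam * u) * f u
      ≤ ∫ u in Set.Ioi (0:ℝ), Real.exp (lam * a) * f u :=
        integral_mono_of_nonneg (.of_forall fun u => mul_nonneg (Real.exp_pos _).le (hf_nonneg u))
          (hf_integrable.const_mul _) (.of_forall hle)
    _ = Real.exp (lam * a) := by rw [integral_const_mul, hf_int, mul_one]

theorem Lambda_le_pow {k : ℕ} {Bmax Δ δ lam c : ℝ} {L : ℕ}
    {p : Finset (Fin (2*k)) × Finset (Fin (2*k)) → (Fin (2*k) → ℝ) → (Fin (2*k) → ℝ) → ℝ}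
    {h : ℝ → ℝ → ℝ}
    (hp_nonneg : ∀ JM ∈ Jk k, ∀ r s, 0 ≤ p JM r s)
    (hp_sum : ∀ r s, ∑ JM ∈ Jk k, p JM r s = 1)
    (hI_nonneg : ∀ x, 0 ≤ ∫ u in Set.Ioi (0:ℝ), Real.exp (lam * u) * h x u)
    (hI_le : ∀ x, Bmax * L - 2*Δ - δ < x →
      ∫ u in Set.Ioi (0:ℝ), Real.exp (lam * u) * h x u ≤ c)
    (hc : 1 ≤ c) :
    Lambda k Bmax Δ δ p h lam L ≤ c ^ (2*k) := by
  refine ciSup_le fun ⟨r, s⟩ => ?_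
  have hprod : ∀ J : Finset (Fin (2*k)),
      ∏ i ∈ J ∩ EL Bmax Δ δ L r, ∫ u in Set.Ioi (0:ℝ), Real.exp (lam * u) * h (r i) u
        ≤ c ^ (2*k) := by
    intro J
    calc _ ≤ ∏ _i ∈ J ∩ EL Bmax Δ δ L r, c :=
          prod_le_prod (fun i _ => hI_nonneg _)
            fun i hi => hI_le _ (mem_filter.1 (mem_inter.1 hi).2).2
      _ = c ^ (J ∩ EL Bmax Δ δ L r).card := prod_const c
      _ ≤ c ^ (2*k) := pow_le_pow_right₀ hc ((card_le_univ _).trans (Fintype.card_fin _).le)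
  calc _ ≤ ∑ JM ∈ Jk k, p JM r s * c ^ (2*k) :=
        sum_le_sum fun JM hJM => mul_le_mul_of_nonneg_left (hprod JM.1) (hp_nonneg JM hJM r s)
    _ = c ^ (2*k) := by rw [← sum_mul, hp_sum, one_mul]

theorem exists_pos_exp_mul_pow_lt (lam : ℝ) (n : ℕ) {ε : ℝ} (hε : 0 < ε) :
    ∃ η > 0, Real.exp (lam * η) ^ n < 1 + ε := by
  have hcont : Tendsto (fun t => Real.exp (lam * t) ^ n) (𝓝[>] 0) (𝓝 1) := by
    have : Continuous fun t => Real.exp (lam * t) ^ n := by fun_prop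
    simpa using (this.tendsto 0).mono_left nhdsWithin_le_nhds
  exact ((hcont.eventually (gt_mem_nhds (by linarith))).and self_mem_nhdsWithin).exists.imp
    fun η hη => ⟨hη.2, hη.1⟩

theorem statement5_general
    (k : ℕ)
    (δ Δ Bmax : ℝ) (hδ : 0 < δ) (hΔ : 0 < Δ) (hB : Δ + δ < Bmax)
    (p : Finset (Fin (2*k)) × Finset (Fin (2*k)) → (Fin (2*k) → ℝ) → (Fin (2*k) → ℝ) → ℝ)
    (hp_mem : ∀ JM ∈ Jk k, ∀ r s : Fin (2*k) → ℝ, p JM r s ∈ Set.Icc (0:ℝ) 1)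
    (hp_sum : ∀ r s : Fin (2*k) → ℝ, ∑ JM ∈ Jk k, p JM r s = 1)
    (Δx : ℝ → ℝ)
    (h : ℝ → ℝ → ℝ)
    (hh_nonneg : ∀ x u, 0 ≤ h x u)
    (hh_int : ∀ x, ∫ u in Set.Ioi (0:ℝ), h x u = 1)
    (hh_supp : ∀ x u, u ∉ Set.Icc (0:ℝ) (Δx x) → h x u = 0)
    (hΔx_lim : Filter.Tendsto Δx Filter.atTop (nhds 0)) :
    ∀ lam : ℝ, 0 < lam → ∀ ε : ℝ, 0 < ε →
      ∃ L : ℕ, 0 < L ∧ Lambda k Bmax Δ δ p h lam L ≤ 1 + ε := by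
  intro lam hlam ε hε
  obtain ⟨η, hη, hηε⟩ := exists_pos_exp_mul_pow_lt lam (2*k) hε
  obtain ⟨X, hX⟩ := eventually_atTop.1 (hΔx_lim.eventually_lt_const hη)
  have hthreshold : Tendsto (fun L : ℕ => Bmax * L - 2*Δ - δ) atTop atTop :=
    tendsto_atTop_add_const_right _ _ <| tendsto_atTop_add_const_right _ _ <|
      tendsto_natCast_atTop_atTop.const_mul_atTop (by linarith)
  obtain ⟨L, hL, hLX⟩ :=
    ((eventually_gt_atTop 0).and (hthreshold.eventually_ge_atTop X)).exists
  refine ⟨L, hL, (Lambda_le_pow (fun JM hJM r s => (hp_mem JM hJM r s).1) hp_sum ?_ ?_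
    (Real.one_le_exp (by positivity))).trans hηε.le⟩
  · exact fun x => setIntegral_nonneg measurableSet_Ioi
      fun u _ => mul_nonneg (Real.exp_pos _).le (hh_nonneg x u)
  · intro x hx
    calc _ ≤ Real.exp (lam * Δx x) :=
          setIntegral_Ioi_exp_mul_le hlam.le (hh_nonneg x) (hh_int x) (hh_supp x)
      _ ≤ Real.exp (lam * η) := Real.exp_le_exp.2 (by nlinarith [hX x (by linarith)])

theorem statement5
    (k : ℕ) (hk : 0 < k)
    (δ Δ Bmax : ℝ) (hδ : 0 < δ) (hΔ : 0 < Δ) (hB : Δ + δ < Bmax)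
    (p : Finset (Fin (2*k)) × Finset (Fin (2*k)) → (Fin (2*k) → ℝ) → (Fin (2*k) → ℝ) → ℝ)
    (hp_meas : ∀ JM, Measurable fun rs : (Fin (2*k) → ℝ) × (Fin (2*k) → ℝ) => p JM rs.1 rs.2)
    (hp_mem : ∀ JM ∈ Jk k, ∀ r s : Fin (2*k) → ℝ, p JM r s ∈ Set.Icc (0:ℝ) 1)
    (hp_sum : ∀ r s : Fin (2*k) → ℝ, ∑ JM ∈ Jk k, p JM r s = 1)
    (Δx : ℝ → ℝ) (hΔx : ∀ x, Δx x ∈ Set.Ioc (0:ℝ) Δ)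
    (h : ℝ → ℝ → ℝ)
    (hh_meas : Measurable (Function.uncurry h))
    (hh_nonneg : ∀ x u, 0 ≤ h x u)
    (hh_int : ∀ x, ∫ u in Set.Ioi (0:ℝ), h x u = 1)
    (hh_supp : ∀ x u, u ∉ Set.Icc (0:ℝ) (Δx x) → h x u = 0)
    (hΔx_lim : Filter.Tendsto Δx Filter.atTop (nhds 0)) :
    ∀ lam : ℝ, 0 < lam → ∀ ε : ℝ, 0 < ε →
      ∃ L : ℕ, 0 < L ∧ Lambda k Bmax Δ δ p h lam L ≤ 1 + ε :=
  statement5_general k δ Δ Bmax hδ hΔ hB p hp_mem hp_sum Δx h hh_nonneg hh_int hh_supp hΔx_lim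
end
end

section
/- Let b : ℝ₊ → ℝ₊ be measurable and suppose there exist b̃ > 0 and d ∈ ℕ with b(a) ≤ b̃(1 + a^d) for all a ≥ 0, and there exist a₀ ≥ 0 and b₀ > 0 with b(a) ≥ b₀ for all a ≥ a₀. Define f(y) = ∫₀^∞ b(s) · exp(−∫₀^s b(u) du − y s) ds for y ≥ 0. Then f is continuous and nonincreasing on [0, ∞), f(0) = 1, and lim_{y → +∞} f(y) = 0; consequently, for every c ∈ (0, 1) there exists y > 0 such that f(y) = c. -/
/-!
Write `B(s) = ∫₀ˢ b`. Then `f` is the Laplace transform of `g = b e^{-B}`, the density of the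
first event of a point process with rate `b`. Since `B` is absolutely continuous with `B' = b`
a.e., `∫₀ᵀ g = 1 - e^{-B(T)}`, which tends to `1` because `B(T) ≥ b₀ (T - a₀)`; so `g` is a
probability density on `(0, ∞)`. The Laplace transform of any nonnegative integrable function is
continuous and antitone on `[0, ∞)` and vanishes at infinity by dominated convergence, and the
intermediate value theorem gives the last claim.
-/

open MeasureTheory Set Filter Topology

theorem LocallyLipschitz.comp_absolutelyContinuousOnInterval {g f : ℝ → ℝ} {a b : ℝ}
    (hg : LocallyLipschitz g) (hf : AbsolutelyContinuousOnInterval f a b) :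
    AbsolutelyContinuousOnInterval (g ∘ f) a b := by
  obtain ⟨K, hK⟩ := (hg.locallyLipschitzOn (s := f '' uIcc a b)).exists_lipschitzOnWith_of_compact
    (isCompact_uIcc.image_of_continuousOn hf.continuousOn)
  unfold AbsolutelyContinuousOnInterval at hf ⊢
  refine squeeze_zero' (Eventually.of_forall fun _ ↦ Finset.sum_nonneg fun _ _ ↦ dist_nonneg)
    ?_ (by simpa using hf.const_mul (K : ℝ))
  rw [eventually_inf_principal]
  filter_upwards with ⟨n, I⟩ hI
  rw [Finset.mul_sum]
  gcongr with i hi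
  exact hK.dist_le_mul _ (mem_image_of_mem f (hI.1 i hi).1) _ (mem_image_of_mem f (hI.1 i hi).2)

theorem integral_mul_exp_neg_primitive {b : ℝ → ℝ} {a T : ℝ}
    (hb : IntervalIntegrable b volume a T) :
    ∫ s in a..T, b s * Real.exp (-∫ u in a..s, b u) = 1 - Real.exp (-∫ u in a..T, b u) := by
  set B : ℝ → ℝ := fun s ↦ ∫ u in a..s, b u
  have hB : AbsolutelyContinuousOnInterval B a T :=
    hb.absolutelyContinuousOnInterval_intervalIntegral (by simp)
  have hE : AbsolutelyContinuousOnInterval (fun s ↦ Real.exp (-B s)) a T :=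
    (Real.contDiff_exp.locallyLipschitz).comp_absolutelyContinuousOnInterval hB.neg
  have hderiv : ∀ᵐ s, s ∈ uIoc a T →
      deriv (fun s ↦ Real.exp (-B s)) s = -(b s * Real.exp (-B s)) := by
    filter_upwards [hb.ae_hasDerivAt_integral] with s hs hsI
    have hBs : HasDerivAt B (b s) s := hs (uIoc_subset_uIcc hsI) a (by simp)
    rw [hBs.fun_neg.exp.deriv]; ring
  calc ∫ s in a..T, b s * Real.exp (-B s)
      = -∫ s in a..T, deriv (fun s ↦ Real.exp (-B s)) s := by
        rw [← intervalIntegral.integral_neg]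
        refine intervalIntegral.integral_congr_ae ?_
        filter_upwards [hderiv] with s hs hsI
        rw [hs hsI, neg_neg]
    _ = 1 - Real.exp (-B T) := by
        rw [hE.integral_deriv_eq_sub]; simp [B]

noncomputable def laplaceTransform (g : ℝ → ℝ) (y : ℝ) : ℝ :=
  ∫ s in Ioi 0, g s * Real.exp (-(y * s))

section Laplace

variable {g : ℝ → ℝ}

theorem norm_mul_exp_neg_mul_le {y s : ℝ} (hy : 0 ≤ y) (hs : s ∈ Ioi (0 : ℝ)) :
    ‖g s * Real.exp (-(y * s))‖ ≤ ‖g s‖ := by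
  rw [norm_mul, Real.norm_of_nonneg (Real.exp_nonneg _)]
  exact mul_le_of_le_one_right (norm_nonneg _)
    (Real.exp_le_one_iff.mpr (neg_nonpos.mpr (mul_nonneg hy (le_of_lt hs))))

theorem aestronglyMeasurable_mul_exp_neg_mul (hg : IntegrableOn g (Ioi 0)) (y : ℝ) :
    AEStronglyMeasurable (fun s ↦ g s * Real.exp (-(y * s))) (volume.restrict (Ioi 0)) :=
  hg.aestronglyMeasurable.mul
    (by fun_prop : Continuous fun s ↦ Real.exp (-(y * s))).aestronglyMeasurable

theorem ae_norm_mul_exp_neg_mul_le {y : ℝ} (hy : 0 ≤ y) :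
    ∀ᵐ s ∂volume.restrict (Ioi 0), ‖g s * Real.exp (-(y * s))‖ ≤ ‖g s‖ :=
  (ae_restrict_iff' measurableSet_Ioi).mpr (ae_of_all _ fun _ ↦ norm_mul_exp_neg_mul_le hy)

theorem integrableOn_mul_exp_neg_mul (hg : IntegrableOn g (Ioi 0)) {y : ℝ} (hy : 0 ≤ y) :
    IntegrableOn (fun s ↦ g s * Real.exp (-(y * s))) (Ioi 0) :=
  hg.norm.mono' (aestronglyMeasurable_mul_exp_neg_mul hg y) (ae_norm_mul_exp_neg_mul_le hy)

theorem laplaceTransform_zero : laplaceTransform g 0 = ∫ s in Ioi 0, g s := by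
  simp [laplaceTransform]

theorem continuousOn_laplaceTransform (hg : IntegrableOn g (Ioi 0)) :
    ContinuousOn (laplaceTransform g) (Ici 0) :=
  continuousOn_of_dominated (fun y _ ↦ aestronglyMeasurable_mul_exp_neg_mul hg y)
    (fun _ hy ↦ ae_norm_mul_exp_neg_mul_le hy) hg.norm
    (ae_of_all _ fun _ ↦ by fun_prop)

theorem antitoneOn_laplaceTransform (hg : IntegrableOn g (Ioi 0))
    (hg_nonneg : ∀ s, 0 < s → 0 ≤ g s) : AntitoneOn (laplaceTransform g) (Ici 0) := by
  intro y₁ hy₁ y₂ hy₂ hy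
  refine setIntegral_mono_on (integrableOn_mul_exp_neg_mul hg hy₂)
    (integrableOn_mul_exp_neg_mul hg hy₁) measurableSet_Ioi fun s hs ↦ ?_
  gcongr
  · exact hg_nonneg s hs
  · exact le_of_lt hs

theorem tendsto_laplaceTransform_atTop (hg : IntegrableOn g (Ioi 0)) :
    Tendsto (laplaceTransform g) atTop (𝓝 0) := by
  have hlim : ∀ s ∈ Ioi (0 : ℝ),
      Tendsto (fun y ↦ g s * Real.exp (-(y * s))) atTop (𝓝 0) := fun s hs ↦ by
    simpa using ((Real.tendsto_exp_atBot.comp (tendsto_neg_atTop_atBot.comp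
      (tendsto_id.atTop_mul_const hs))).const_mul (g s))
  show Tendsto (fun y ↦ ∫ s in Ioi 0, g s * Real.exp (-(y * s))) atTop (𝓝 0)
  simpa using tendsto_integral_filter_of_dominated_convergence _
    (Eventually.of_forall (aestronglyMeasurable_mul_exp_neg_mul hg))
    ((eventually_ge_atTop 0).mono fun _ hy ↦ ae_norm_mul_exp_neg_mul_le hy) hg.norm
    ((ae_restrict_iff' measurableSet_Ioi).mpr (ae_of_all _ hlim))

end Laplace

theorem ContinuousOn.exists_pos_eq_of_tendsto_atTop {f : ℝ → ℝ} {l c : ℝ}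
    (hf : ContinuousOn f (Ici 0)) (hlim : Tendsto f atTop (𝓝 l)) (hc : c ∈ Ioo l (f 0)) :
    ∃ y, 0 < y ∧ f y = c := by
  obtain ⟨Y, hfY, hY⟩ := ((hlim.eventually_lt_const hc.1).and (eventually_ge_atTop 0)).exists
  obtain ⟨y, hy, hfy⟩ :=
    intermediate_value_Ioo' hY (hf.mono Icc_subset_Ici_self) ⟨hfY, hc.2⟩
  exact ⟨y, hy.1, hfy⟩

noncomputable def hazardDensity (b : ℝ → ℝ) (s : ℝ) : ℝ :=
  b s * Real.exp (-∫ u in 0..s, b u)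

section Hazard

variable {b : ℝ → ℝ}

theorem integrableOn_Ioc_hazardDensity (hb : ∀ T, 0 ≤ T → IntervalIntegrable b volume 0 T)
    (T : ℝ) : IntegrableOn (hazardDensity b) (Ioc 0 T) := by
  rcases le_total 0 T with hT | hT
  · have hB := intervalIntegral.continuousOn_primitive_interval' (hb T hT) left_mem_uIcc
    exact (intervalIntegrable_iff_integrableOn_Ioc_of_le hT).mp
      ((hb T hT).mul_continuousOn (Real.continuous_exp.comp_continuousOn hB.neg))
  · simp [Ioc_eq_empty_of_le hT]

theorem integrableOn_hazardDensity (hb : ∀ T, 0 ≤ T → IntervalIntegrable b volume 0 T)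
    (hb_nonneg : ∀ s, 0 ≤ s → 0 ≤ b s) : IntegrableOn (hazardDensity b) (Ioi 0) := by
  refine integrableOn_Ioi_of_intervalIntegral_norm_bounded 1 0
    (integrableOn_Ioc_hazardDensity hb) tendsto_id ?_
  filter_upwards [eventually_ge_atTop 0] with T hT
  have hnorm : ∫ s in 0..T, ‖hazardDensity b s‖ = ∫ s in 0..T, hazardDensity b s := by
    refine intervalIntegral.integral_congr fun s hs ↦ Real.norm_of_nonneg ?_
    rw [uIcc_of_le hT] at hs
    exact mul_nonneg (hb_nonneg s hs.1) (Real.exp_nonneg _)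
  rw [hnorm]
  unfold hazardDensity
  rw [integral_mul_exp_neg_primitive (hb T hT)]
  linarith [Real.exp_nonneg (-∫ u in 0..T, b u)]

theorem integral_hazardDensity (hb : ∀ T, 0 ≤ T → IntervalIntegrable b volume 0 T)
    (hb_nonneg : ∀ s, 0 ≤ s → 0 ≤ b s) (hB : Tendsto (fun T ↦ ∫ u in 0..T, b u) atTop atTop) :
    ∫ s in Ioi 0, hazardDensity b s = 1 := by
  have hsurv : Tendsto (fun T ↦ 1 - Real.exp (-∫ u in 0..T, b u)) atTop (𝓝 (1 - 0)) :=
    (Real.tendsto_exp_atBot.comp (tendsto_neg_atTop_atBot.comp hB)).const_sub 1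
  refine tendsto_nhds_unique
    (intervalIntegral_tendsto_integral_Ioi 0 (integrableOn_hazardDensity hb hb_nonneg) tendsto_id)
    ?_
  rw [sub_zero] at hsurv
  exact hsurv.congr' ((eventually_ge_atTop 0).mono fun T hT ↦
    (integral_mul_exp_neg_primitive (hb T hT)).symm)

end Hazard

theorem intervalIntegrable_of_nonneg_of_le {b p : ℝ → ℝ} (hb : AEStronglyMeasurable b)
    (hp : Continuous p) (hb_nonneg : ∀ a, 0 ≤ a → 0 ≤ b a) (hbp : ∀ a, 0 ≤ a → b a ≤ p a)
    {T : ℝ} (hT : 0 ≤ T) : IntervalIntegrable b volume 0 T := by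
  refine (hp.intervalIntegrable 0 T).mono_fun' hb.restrict ?_
  refine (ae_restrict_iff' measurableSet_uIoc).mpr (ae_of_all _ fun a ha ↦ ?_)
  rw [uIoc_of_le hT] at ha
  simpa only [Real.norm_of_nonneg (hb_nonneg a ha.1.le)] using hbp a ha.1.le

theorem tendsto_intervalIntegral_atTop_of_le {b : ℝ → ℝ} {a₀ b₀ : ℝ} (hb₀ : 0 < b₀)
    (hb : ∀ T, 0 ≤ T → IntervalIntegrable b volume 0 T) (hb_nonneg : ∀ s, 0 ≤ s → 0 ≤ b s)
    (hlb : ∀ s, a₀ ≤ s → b₀ ≤ b s) :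
    Tendsto (fun T ↦ ∫ u in 0..T, b u) atTop atTop := by
  set c := max a₀ 0
  have hc : 0 ≤ c := le_max_right _ _
  refine tendsto_atTop_mono' _ ?_
    ((tendsto_atTop_add_const_right _ (-c) tendsto_id).const_mul_atTop hb₀)
  filter_upwards [eventually_ge_atTop c] with T hT
  have hcT : IntervalIntegrable b volume c T :=
    (hb c hc).symm.trans (hb T (hc.trans hT))
  rw [← intervalIntegral.integral_add_adjacent_intervals (hb c hc) hcT]
  have hhead : 0 ≤ ∫ u in 0..c, b u :=
    intervalIntegral.integral_nonneg hc fun u hu ↦ hb_nonneg u hu.1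
  have htail : ∫ u in c..T, b₀ ≤ ∫ u in c..T, b u :=
    intervalIntegral.integral_mono_on hT intervalIntegrable_const hcT
      fun u hu ↦ hlb u ((le_max_left _ _).trans hu.1)
  simp only [intervalIntegral.integral_const, smul_eq_mul] at htail
  simp only [id]
  linarith

theorem statement14_general (b : ℝ → ℝ) (hb_meas : Measurable b)
    (hb_nonneg : ∀ a, 0 ≤ a → 0 ≤ b a)
    (btil : ℝ) (d : ℕ)
    (hub : ∀ a, 0 ≤ a → b a ≤ btil * (1 + a ^ d))
    (a₀ b₀ : ℝ) (hb₀ : 0 < b₀)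
    (hlb : ∀ a, a₀ ≤ a → b₀ ≤ b a)
    (f : ℝ → ℝ)
    (hf : ∀ y : ℝ,
      f y = ∫ s in Set.Ioi (0:ℝ), b s * Real.exp (-(∫ u in (0:ℝ)..s, b u) - y * s)) :
    ContinuousOn f (Set.Ici 0) ∧ AntitoneOn f (Set.Ici 0) ∧ f 0 = 1 ∧
      Filter.Tendsto f Filter.atTop (nhds 0) ∧
      ∀ c : ℝ, c ∈ Set.Ioo (0:ℝ) 1 → ∃ y : ℝ, 0 < y ∧ f y = c := by
  have hb : ∀ T, 0 ≤ T → IntervalIntegrable b volume 0 T :=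
    fun _ ↦ intervalIntegrable_of_nonneg_of_le hb_meas.aestronglyMeasurable (by fun_prop)
      hb_nonneg hub
  have hf_eq : f = laplaceTransform (hazardDensity b) := by
    ext y
    rw [hf y, laplaceTransform]
    congr! 2 with s
    rw [hazardDensity, mul_assoc, ← Real.exp_add, sub_eq_add_neg]
  have hg := integrableOn_hazardDensity hb hb_nonneg
  have hf0 : f 0 = 1 := by
    rw [hf_eq, laplaceTransform_zero, integral_hazardDensity hb hb_nonneg
      (tendsto_intervalIntegral_atTop_of_le hb₀ hb hb_nonneg hlb)]
  have hcont : ContinuousOn f (Ici 0) := hf_eq ▸ continuousOn_laplaceTransform hg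
  have hlim : Tendsto f atTop (𝓝 0) := hf_eq ▸ tendsto_laplaceTransform_atTop hg
  refine ⟨hcont, hf_eq ▸ antitoneOn_laplaceTransform hg fun s hs ↦ ?_, hf0, hlim,
    fun c hc ↦ hcont.exists_pos_eq_of_tendsto_atTop hlim (hf0 ▸ hc)⟩
  exact mul_nonneg (hb_nonneg s hs.le) (Real.exp_nonneg _)

theorem statement14 (b : ℝ → ℝ) (hb_meas : Measurable b)
    (hb_nonneg : ∀ a, 0 ≤ a → 0 ≤ b a)
    (btil : ℝ) (d : ℕ) (hbtil : 0 < btil)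
    (hub : ∀ a, 0 ≤ a → b a ≤ btil * (1 + a ^ d))
    (a₀ b₀ : ℝ) (ha₀ : 0 ≤ a₀) (hb₀ : 0 < b₀)
    (hlb : ∀ a, a₀ ≤ a → b₀ ≤ b a)
    (f : ℝ → ℝ)
    (hf : ∀ y : ℝ,
      f y = ∫ s in Set.Ioi (0:ℝ), b s * Real.exp (-(∫ u in (0:ℝ)..s, b u) - y * s)) :
    ContinuousOn f (Set.Ici 0) ∧ AntitoneOn f (Set.Ici 0) ∧ f 0 = 1 ∧
      Filter.Tendsto f Filter.atTop (nhds 0) ∧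
      ∀ c : ℝ, c ∈ Set.Ioo (0:ℝ) 1 → ∃ y : ℝ, 0 < y ∧ f y = c :=
  statement14_general b hb_meas hb_nonneg btil d hub a₀ b₀ hb₀ hlb f hf
end

section
/- Let δ, κ > 0, set r = min(δ, κ)/10, let γ, ω ∈ ℕ* with γ ≤ ω, let m₀ ∈ ℕ with m₀ ≥ ω − γ, and let Y > 0. For y ≥ 0 and s ∈ ℝ define F(y, s) = ∫_{u ∈ [0,δ]^{γ−1}} ∫_{v ∈ [0,κ]^{ω}} g₁(s, u, v) · g₂(y, s, u, v) du dv, where g₁(s, u, v) = 1{ s ∈ [ −δ + Σ_{i=1}^{γ−1}(v_i − u_i) + Σ_{i=γ}^{ω} v_i , Σ_{i=1}^{γ−1}(v_i − u_i) + Σ_{i=γ}^{ω} v_i ] }, and g₂(y, s, u, v) = 1{ y + s − Σ_{i=γ+1}^{ω} v_i ≥ 0 } if γ = 1, and g₂(y, s, u, v) = 1{ ∀ l ∈ {1, …, γ−1} : y + Σ_{i=1}^{l}(v_i − u_i) ≥ 0 } · 1{ y + s − Σ_{i=γ+1}^{ω} v_i ≥ 0 } if γ ≥ 2. Then there exists c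 > 0 such that for all y ∈ [0, Y] and all s ∈ [max(−3r, −y), 3r]: F(y, s) ≥ c · (y + s)^{m₀}. -/
/-!
Restrict both integrals to a box on which the integrand is identically `1`. With
`ε = r / (2γ)` and `b = min (y + s) ε / ω`, take `u_i ∈ [0, ε]`, `v_i ∈ [ε, 2ε]` for `i < γ`,
`v_γ ∈ [4r, 5r]` and `v_i ∈ [0, b]` for `i > γ`. There the increments `v_i - u_i` are
nonnegative, so every prefix constraint holds; the window sum lies in `[4r, 7r] ⊆ [s, s + δ]`;
and the tail sum is at most `ω b ≤ y + s`. The box has volume `ε^(2(γ-1)) r b^(ω-γ)`, and with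
`T = Y + 3r ≥ y + s` we have `b ≥ ε (y + s) / (T ω)` and
`(y + s)^(ω-γ) ≥ (y + s)^m₀ / T^(m₀-(ω-γ))`.
-/

open MeasureTheory Finset

section SetIntegral

variable {α β : Type*} [MeasurableSpace α] [MeasurableSpace β] {μ : Measure α} {ν : Measure β}

theorem mul_measureReal_le_setIntegral {f : α → ℝ} {c : ℝ} {s t : Set α}
    (hf : IntegrableOn f s μ) (hf₀ : 0 ≤ᵐ[μ.restrict s] f) (ht : MeasurableSet t)
    (hμt : μ t ≠ ⊤) (hts : t ⊆ s) (hc : ∀ x ∈ t, c ≤ f x) : c * μ.real t ≤ ∫ x in s, f x ∂μ :=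
  (setIntegral_ge_of_const_le_real ht hμt hc (hf.mono_set hts)).trans <|
    setIntegral_mono_set hf hf₀ hts.eventuallyLE

theorem measureReal_mul_measureReal_le_setIntegral_setIntegral [SFinite ν] {F : α → β → ℝ}
    (hF : Measurable (Function.uncurry F)) (hF₀ : ∀ x y, 0 ≤ F x y) (hF₁ : ∀ x y, F x y ≤ 1)
    {s s' : Set α} {t t' : Set β} (hs : μ s ≠ ⊤) (ht : ν t ≠ ⊤)
    (hs' : MeasurableSet s') (ht' : MeasurableSet t') (hs's : s' ⊆ s) (ht't : t' ⊆ t)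
    (hF_eq : ∀ x ∈ s', ∀ y ∈ t', F x y = 1) :
    ν.real t' * μ.real s' ≤ ∫ x in s, ∫ y in t, F x y ∂ν ∂μ := by
  have hnorm : ∀ x y, ‖F x y‖ ≤ 1 := fun x y => by
    rw [Real.norm_of_nonneg (hF₀ x y)]; exact hF₁ x y
  have hFx : ∀ x, IntegrableOn (F x) t ν := fun x =>
    Measure.integrableOn_of_bounded ht (hF.comp measurable_prodMk_left).aestronglyMeasurable
      (ae_of_all _ (hnorm x))
  have hG : IntegrableOn (fun x => ∫ y in t, F x y ∂ν) s μ :=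
    Measure.integrableOn_of_bounded hs
      (hF.stronglyMeasurable.integral_prod_right (ν := ν.restrict t)).aestronglyMeasurable
      (ae_of_all _ fun x => norm_setIntegral_le_of_norm_le_const ht.lt_top fun y _ => hnorm x y)
  refine mul_measureReal_le_setIntegral hG
    (ae_of_all _ fun x => setIntegral_nonneg_of_ae (ae_of_all _ (hF₀ x))) hs'
    (ne_top_of_le_ne_top hs (measure_mono hs's)) hs's fun x hx => ?_
  simpa only [one_mul] using mul_measureReal_le_setIntegral (hFx x) (ae_of_all _ (hF₀ x)) ht'
    (ne_top_of_le_ne_top ht (measure_mono ht't)) ht't fun y hy => (hF_eq x hx y hy).ge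

end SetIntegral

section Blocks

variable {M : Type*}

def threeBlock (n : ℕ) (a b c : M) (i : ℕ) : M :=
  if i < n then a else if i = n then b else c

theorem prod_range_threeBlock [CommMonoid M] (n k : ℕ) (a b c : M) :
    ∏ i ∈ range (n + 1 + k), threeBlock n a b c i = a ^ n * b * c ^ k := by
  rw [prod_range_add, prod_range_succ,
    prod_congr rfl fun i hi => show threeBlock n a b c i = a from if_pos (mem_range.1 hi),
    prod_congr rfl fun i _ => show threeBlock n a b c (n + 1 + i) = c by
      unfold threeBlock; rw [if_neg (by omega), if_neg (by omega)]]
  simp [threeBlock]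

theorem le_threeBlock [LE M] {n : ℕ} {x a b c : M} (ha : x ≤ a) (hb : x ≤ b) (hc : x ≤ c)
    (i : ℕ) : x ≤ threeBlock n a b c i := by
  unfold threeBlock; split_ifs <;> assumption

theorem threeBlock_le [LE M] {n : ℕ} {x a b c : M} (ha : a ≤ x) (hb : b ≤ x) (hc : c ≤ x)
    (i : ℕ) : threeBlock n a b c i ≤ x := by
  unfold threeBlock; split_ifs <;> assumption

theorem threeBlock_mono [LE M] {n : ℕ} {a b c a' b' c' : M} (ha : a ≤ a') (hb : b ≤ b')
    (hc : c ≤ c') (i : ℕ) : threeBlock n a b c i ≤ threeBlock n a' b' c' i := by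
  unfold threeBlock; split_ifs <;> assumption

theorem threeBlock_sub [Sub M] (n : ℕ) (a b c a' b' c' : M) (i : ℕ) :
    threeBlock n a' b' c' i - threeBlock n a b c i = threeBlock n (a' - a) (b' - b) (c' - c) i := by
  unfold threeBlock; split_ifs <;> rfl

theorem volume_real_Icc_threeBlock {n k ω : ℕ} (hω : n + 1 + k = ω) {a b c a' b' c' : ℝ}
    (ha : a ≤ a') (hb : b ≤ b') (hc : c ≤ c') :
    volume.real (Set.Icc (fun i : Fin ω => threeBlock n a b c i)
      (fun i : Fin ω => threeBlock n a' b' c' i)) = (a' - a) ^ n * (b' - b) * (c' - c) ^ k := by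
  subst hω
  rw [measureReal_def, Real.volume_Icc_pi_toReal fun i : Fin _ => threeBlock_mono ha hb hc i]
  simp only [threeBlock_sub]
  rw [Fin.prod_univ_eq_prod_range (threeBlock n (a' - a) (b' - b) (c' - c)), prod_range_threeBlock]

end Blocks

theorem sum_filter_le_eq_add_sum_filter_lt {M : Type*} [AddCommMonoid M] {ω n : ℕ} (h : n < ω)
    (f : Fin ω → M) :
    ∑ i ∈ univ.filter (fun i : Fin ω => n ≤ (i : ℕ)), f i =
      f ⟨n, h⟩ + ∑ i ∈ univ.filter (fun i : Fin ω => n < (i : ℕ)), f i := by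
  rw [← sum_insert (by simp)]
  congr 1
  ext i
  simp [le_iff_lt_or_eq, Fin.ext_iff, eq_comm, or_comm]

theorem sum_le_card_mul {ι : Type*} [Fintype ι] {s : Finset ι} {f : ι → ℝ} {b : ℝ} (hb : 0 ≤ b)
    (h : ∀ i ∈ s, f i ≤ b) : ∑ i ∈ s, f i ≤ Fintype.card ι * b :=
  (sum_le_card_nsmul s f b h).trans <| by
    rw [nsmul_eq_mul]; gcongr; exact_mod_cast card_le_univ s

theorem pow_div_pow_sub_le {t T : ℝ} {k m : ℕ} (ht : 0 ≤ t) (htT : t ≤ T) (hkm : k ≤ m) :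
    t ^ m / T ^ (m - k) ≤ t ^ k :=
  div_le_of_le_mul₀ (pow_nonneg (ht.trans htT) _) (pow_nonneg ht _) <| by
    rw [← Nat.add_sub_cancel' hkm, pow_add, Nat.add_sub_cancel_left]
    gcongr

theorem pow_div_pow_sub_mul_pow_le {t T a b : ℝ} {k m : ℕ} (ht : 0 ≤ t) (htT : t ≤ T)
    (hkm : k ≤ m) (ha : 0 ≤ a) (hab : a * t ≤ b) : a ^ k / T ^ (m - k) * t ^ m ≤ b ^ k :=
  calc a ^ k / T ^ (m - k) * t ^ m = a ^ k * (t ^ m / T ^ (m - k)) := by ring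
    _ ≤ a ^ k * t ^ k := by gcongr; exact pow_div_pow_sub_le ht htT hkm
    _ = (a * t) ^ k := (mul_pow a t k).symm
    _ ≤ b ^ k := by gcongr

theorem div_mul_le_min {t T ε : ℝ} (ht : 0 ≤ t) (htT : t ≤ T) (hε : 0 ≤ ε) (hεT : ε ≤ T) :
    ε / T * t ≤ min t ε := by
  rw [div_mul_eq_mul_div]
  refine div_le_of_le_mul₀ (ht.trans htT) (le_min ht hε) ?_
  rcases min_choice t ε with h | h <;> rw [h] <;> nlinarith

section Integrand

variable (δ y s : ℝ) {γ ω : ℕ} (h : γ - 1 ≤ ω)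

/-- The integrand `g₁ · g₂`, with the paper's coordinates `u_i`, `v_i` stored at index `i - 1`. -/
noncomputable def integrand (u : Fin (γ - 1) → ℝ) (v : Fin ω → ℝ) : ℝ :=
  (if -δ + ((∑ i : Fin (γ-1), (v (Fin.castLE h i) - u i)) +
        ∑ i ∈ Finset.univ.filter (fun i : Fin ω => γ - 1 ≤ (i : ℕ)), v i) ≤ s ∧
      s ≤ (∑ i : Fin (γ-1), (v (Fin.castLE h i) - u i)) +
        ∑ i ∈ Finset.univ.filter (fun i : Fin ω => γ - 1 ≤ (i : ℕ)), v i
    then (1:ℝ) else 0) *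
  (if (∀ l : Fin (γ-1), 0 ≤ y +
          ∑ i ∈ Finset.univ.filter (fun i : Fin (γ-1) => (i : ℕ) ≤ (l : ℕ)),
            (v (Fin.castLE h i) - u i)) ∧
      0 ≤ y + s - ∑ i ∈ Finset.univ.filter (fun i : Fin ω => γ ≤ (i : ℕ)), v i
    then (1:ℝ) else 0)

theorem measurable_integrand : Measurable (Function.uncurry (integrand δ y s h)) :=
  .mul (.ite (measurableSet_setOfPred.2 (by fun_prop)) measurable_const measurable_const)
    (.ite (measurableSet_setOfPred.2 (by fun_prop)) measurable_const measurable_const)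

theorem integrand_nonneg (u : Fin (γ - 1) → ℝ) (v : Fin ω → ℝ) : 0 ≤ integrand δ y s h u v := by
  unfold integrand; split_ifs <;> norm_num

theorem integrand_le_one (u : Fin (γ - 1) → ℝ) (v : Fin ω → ℝ) : integrand δ y s h u v ≤ 1 := by
  unfold integrand; split_ifs <;> norm_num

variable {δ y s} {r : ℝ} {u : Fin (γ - 1) → ℝ} {v : Fin ω → ℝ}

theorem integrand_eq_one_of_bounds (hγ : 0 < γ) (hγω : γ ≤ ω) (hrδ : 10 * r ≤ δ)
    (hs : s ∈ Set.Icc (-(3 * r)) (3 * r)) (hy : 0 ≤ y)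
    (hpair : ∀ i, 0 ≤ v (Fin.castLE h i) - u i) (hA : ∑ i, (v (Fin.castLE h i) - u i) ≤ r)
    (hanchor : v ⟨γ - 1, by omega⟩ ∈ Set.Icc (4 * r) (5 * r))
    (htail₀ : 0 ≤ ∑ i ∈ univ.filter (fun i : Fin ω => γ ≤ (i : ℕ)), v i)
    (htail_r : ∑ i ∈ univ.filter (fun i : Fin ω => γ ≤ (i : ℕ)), v i ≤ r)
    (htail_ys : ∑ i ∈ univ.filter (fun i : Fin ω => γ ≤ (i : ℕ)), v i ≤ y + s) :
    integrand δ y s h u v = 1 := by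
  have hsplit : ∑ i ∈ univ.filter (fun i : Fin ω => γ - 1 ≤ (i : ℕ)), v i =
      v ⟨γ - 1, by omega⟩ + ∑ i ∈ univ.filter (fun i : Fin ω => γ ≤ (i : ℕ)), v i := by
    rw [sum_filter_le_eq_add_sum_filter_lt (by omega)]
    congr 2
    exact filter_congr fun i _ => by omega
  have hA₀ : 0 ≤ ∑ i, (v (Fin.castLE h i) - u i) := sum_nonneg fun i _ => hpair i
  unfold integrand
  rw [hsplit, if_pos, if_pos, mul_one]
  · exact ⟨fun l => le_add_of_nonneg_of_le hy (sum_nonneg fun i _ => hpair i), by linarith⟩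
  · constructor <;> linarith [hs.1, hs.2, hanchor.1, hanchor.2]

theorem integrand_eq_one (hγ : 0 < γ) (hγω : γ ≤ ω) {ε b : ℝ} (hrδ : 10 * r ≤ δ)
    (hs : s ∈ Set.Icc (-(3 * r)) (3 * r)) (hy : 0 ≤ y) (hε : 0 ≤ ε) (hεr : 2 * γ * ε ≤ r)
    (hb : 0 ≤ b) (hbε : ω * b ≤ ε) (hbys : ω * b ≤ y + s) (hu : u ∈ Set.Icc 0 fun _ => ε)
    (hv : v ∈ Set.Icc (fun i : Fin ω => threeBlock (γ - 1) ε (4 * r) 0 i)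
      (fun i : Fin ω => threeBlock (γ - 1) (2 * ε) (5 * r) b i)) :
    integrand δ y s h u v = 1 := by
  have hpair (i : Fin (γ - 1)) :
      0 ≤ v (Fin.castLE h i) - u i ∧ v (Fin.castLE h i) - u i ≤ 2 * ε := by
    have hvi : ε ≤ v (Fin.castLE h i) ∧ v (Fin.castLE h i) ≤ 2 * ε := by
      simpa [threeBlock, i.isLt] using And.intro (hv.1 (Fin.castLE h i)) (hv.2 (Fin.castLE h i))
    have hui : 0 ≤ u i ∧ u i ≤ ε := ⟨hu.1 i, hu.2 i⟩
    constructor <;> linarith [hui.1, hui.2, hvi.1, hvi.2]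
  have htail (i : Fin ω) (hi : γ ≤ (i : ℕ)) : 0 ≤ v i ∧ v i ≤ b := by
    have : ¬ (i : ℕ) < γ - 1 ∧ (i : ℕ) ≠ γ - 1 := by omega
    simpa [threeBlock, this] using And.intro (hv.1 i) (hv.2 i)
  have hγ₁ : (1 : ℝ) ≤ γ := by exact_mod_cast hγ
  have htail_le : ∑ i ∈ univ.filter (fun i : Fin ω => γ ≤ (i : ℕ)), v i ≤ ω * b := by
    simpa using sum_le_card_mul hb fun i hi => (htail i (mem_filter.1 hi).2).2
  refine integrand_eq_one_of_bounds h hγ hγω hrδ hs hy (fun i => (hpair i).1) ?_ ?_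
    (sum_nonneg fun i hi => (htail i (mem_filter.1 hi).2).1) (by nlinarith) (by linarith)
  · refine (sum_le_card_mul (by linarith) fun i _ => (hpair i).2).trans ?_
    have : ((γ - 1 : ℕ) : ℝ) ≤ γ := by exact_mod_cast Nat.sub_le γ 1
    rw [Fintype.card_fin]
    nlinarith
  · simpa [threeBlock] using And.intro (hv.1 ⟨γ - 1, by omega⟩) (hv.2 ⟨γ - 1, by omega⟩)

theorem le_setIntegral_setIntegral_integrand (hγ : 0 < γ) (hγω : γ ≤ ω) {κ ε b : ℝ}
    (hrδ : 10 * r ≤ δ) (hrκ : 10 * r ≤ κ) (hs : s ∈ Set.Icc (-(3 * r)) (3 * r)) (hy : 0 ≤ y)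
    (hε : 0 ≤ ε) (hεr : 2 * γ * ε ≤ r) (hb : 0 ≤ b) (hbε : ω * b ≤ ε) (hbys : ω * b ≤ y + s) :
    ε ^ (γ - 1) * r * ε ^ (γ - 1) * b ^ (ω - γ) ≤
      ∫ u in Set.univ.pi fun _ => Set.Icc 0 δ, ∫ v in Set.univ.pi fun _ => Set.Icc 0 κ,
        integrand δ y s h u v := by
  have hεr' : ε ≤ r := by
    have : (1 : ℝ) ≤ γ := by exact_mod_cast hγ
    nlinarith
  have hbε' : b ≤ ε := by
    have : (1 : ℝ) ≤ ω := by exact_mod_cast hγ.trans_le hγω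
    nlinarith
  have hU : (Set.Icc 0 fun _ => ε) ⊆ Set.univ.pi fun _ : Fin (γ - 1) => Set.Icc (0 : ℝ) δ :=
    fun u hu i _ => ⟨hu.1 i, (hu.2 i).trans (show ε ≤ δ by linarith)⟩
  have hV : Set.Icc (fun i : Fin ω => threeBlock (γ - 1) ε (4 * r) 0 i)
      (fun i : Fin ω => threeBlock (γ - 1) (2 * ε) (5 * r) b i) ⊆
      Set.univ.pi fun _ : Fin ω => Set.Icc (0 : ℝ) κ := fun v hv i _ =>
    ⟨(le_threeBlock hε (by linarith) le_rfl i).trans (hv.1 i),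
      (hv.2 i).trans (threeBlock_le (by linarith) (by linarith) (by linarith) i)⟩
  refine (le_of_eq ?_).trans (measureReal_mul_measureReal_le_setIntegral_setIntegral
    (measurable_integrand δ y s h) (integrand_nonneg δ y s h) (integrand_le_one δ y s h)
    (isCompact_univ_pi fun _ => isCompact_Icc).measure_lt_top.ne
    (isCompact_univ_pi fun _ => isCompact_Icc).measure_lt_top.ne measurableSet_Icc
    measurableSet_Icc hU hV fun u hu v hv =>
      integrand_eq_one h hγ hγω hrδ hs hy hε hεr hb hbε hbys hu hv)
  rw [volume_real_Icc_threeBlock (by omega : γ - 1 + 1 + (ω - γ) = ω) (by linarith)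
    (by linarith) hb, measureReal_def,
    Real.volume_Icc_pi_toReal (show (0 : Fin (γ - 1) → ℝ) ≤ fun _ => ε from fun _ => hε)]
  simp only [Pi.zero_apply, sub_zero, prod_const, card_univ, Fintype.card_fin]
  ring

end Integrand

theorem statement17 (δ κ : ℝ) (hδ : 0 < δ) (hκ : 0 < κ)
    (γ ω : ℕ) (hγ : 0 < γ) (hγω : γ ≤ ω)
    (m₀ : ℕ) (hm₀ : ω - γ ≤ m₀) (Y : ℝ) (hY : 0 < Y) :
    ∃ c : ℝ, 0 < c ∧ ∀ y s : ℝ, y ∈ Set.Icc (0:ℝ) Y →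
      s ∈ Set.Icc (max (-(3 * (min δ κ / 10))) (-y)) (3 * (min δ κ / 10)) →
      c * (y + s) ^ m₀ ≤
        ∫ u : Fin (γ-1) → ℝ in Set.univ.pi fun _ => Set.Icc (0:ℝ) δ,
          ∫ v : Fin ω → ℝ in Set.univ.pi fun _ => Set.Icc (0:ℝ) κ,
            (if -δ + ((∑ i : Fin (γ-1), (v (Fin.castLE (by omega) i) - u i)) +
                  ∑ i ∈ Finset.univ.filter (fun i : Fin ω => γ - 1 ≤ (i : ℕ)), v i) ≤ s ∧
                s ≤ (∑ i : Fin (γ-1), (v (Fin.castLE (by omega) i) - u i)) +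
                  ∑ i ∈ Finset.univ.filter (fun i : Fin ω => γ - 1 ≤ (i : ℕ)), v i
              then (1:ℝ) else 0) *
            (if (∀ l : Fin (γ-1), 0 ≤ y +
                    ∑ i ∈ Finset.univ.filter (fun i : Fin (γ-1) => (i : ℕ) ≤ (l : ℕ)),
                      (v (Fin.castLE (by omega) i) - u i)) ∧
                0 ≤ y + s - ∑ i ∈ Finset.univ.filter (fun i : Fin ω => γ ≤ (i : ℕ)), v i
              then (1:ℝ) else 0) := by
  set r := min δ κ / 10 with hr_def
  have hr : 0 < r := by positivity
  have hrδ : 10 * r ≤ δ := by linarith [min_le_left δ κ]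
  have hrκ : 10 * r ≤ κ := by linarith [min_le_right δ κ]
  set ε := r / (2 * γ)
  have hε : 0 < ε := by positivity
  have hεr : 2 * γ * ε = r := mul_div_cancel₀ r (by positivity)
  have hω : (0 : ℝ) < ω := by exact_mod_cast hγ.trans_le hγω
  set T := Y + 3 * r
  refine ⟨ε ^ (γ - 1) * r * ε ^ (γ - 1) * ((ε / T / ω) ^ (ω - γ) / T ^ (m₀ - (ω - γ))),
    by positivity, ?_⟩
  rintro y s ⟨hy₀, hyY⟩ ⟨hs₁, hs₂⟩
  have hys : 0 ≤ y + s := by linarith [le_max_right (-(3 * r)) (-y)]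
  set b := min (y + s) ε / ω
  have hωb : ω * b = min (y + s) ε := mul_div_cancel₀ _ hω.ne'
  have hbT : ε / T / ω * (y + s) ≤ b := by
    rw [div_mul_eq_mul_div]
    have hεT : ε ≤ T := by
      have : (1 : ℝ) ≤ γ := by exact_mod_cast hγ
      nlinarith
    exact div_le_div_of_nonneg_right (div_mul_le_min hys (by linarith) hε.le hεT) hω.le
  calc _ = ε ^ (γ - 1) * r * ε ^ (γ - 1) *
        ((ε / T / ω) ^ (ω - γ) / T ^ (m₀ - (ω - γ)) * (y + s) ^ m₀) := mul_assoc _ _ _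
    _ ≤ ε ^ (γ - 1) * r * ε ^ (γ - 1) * b ^ (ω - γ) := by
      gcongr
      exact pow_div_pow_sub_mul_pow_le hys (by linarith) hm₀ (by positivity) hbT
    _ ≤ _ := le_setIntegral_setIntegral_integrand _ hγ hγω hrδ hrκ
      ⟨(le_max_left _ _).trans hs₁, hs₂⟩ hy₀ hε.le hεr.le (by positivity)
      (hωb.trans_le (min_le_right _ _)) (hωb.trans_le (min_le_left _ _))
end
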